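/- arXiv:0909.2538 — 5 statements merged into one kernel-verified Lean document; each statement's English description precedes it below -/
import Mathlib

section
/- Let K be a set of positive integers, let L = ⋃_{n∈K} ((−log(n+1), −log n] ∪ [log n, log(n+1))), let π_K(x) = #{n ∈ K : n ≤ x}, and let δ > 0. Then liminf_{ξ→∞} |L ∩ (ξ−δ, ξ)| > 0 (Lebesgue measure) if and only if liminf_{ξ→∞} (π_K(e^ξ) − π_K(e^{ξ−δ}))/e^ξ > 0. -/
open MeasureTheory Set Filter Topology ComplexConjugate

noncomputable section

/-- The restriction of Lebesgue measure to a set `S ⊆ ℝ`; we regard `L²(S)` as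
`Lp ℂ 2 (mu S)`, identified with the subspace of `L²(ℝ)` of functions supported in `S`. -/
def mu (S : Set ℝ) : Measure ℝ := volume.restrict S

/-- `coeff S g x = ∫_S g(τ) e^{-i x τ} dτ`, i.e. `√(2π)` times the Fourier transform
`F g (x) = (2π)^{-1/2} ∫ g(ξ) e^{-iξx} dξ` of `g` regarded as a function supported in `S`. -/
def coeff (S : Set ℝ) (g : ℝ → ℂ) (x : ℝ) : ℂ :=
  ∫ τ in S, g τ * Complex.exp (-(Complex.I * x * τ))

/-- The set `L = ⋃_{n∈K} ((−log(n+1), −log n] ∪ [log n, log(n+1)))`. -/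
def Lset (K : Set ℕ) : Set ℝ :=
  ⋃ n ∈ K, (Ioc (-Real.log (n + 1)) (-Real.log n) ∪ Ico (Real.log n) (Real.log (n + 1)))

/-- Counting function `π_K(x) = #{n ∈ K : n ≤ x}`, as a real number. -/
def countK (K : Set ℕ) (x : ℝ) : ℝ := ((K ∩ {n : ℕ | (n : ℝ) ≤ x}).ncard : ℝ)

/-- Defining (weak) property of the operator `𝒵_{K,I}` on `L²(S)`: tested against any
`φ ∈ L²(S)` it is given by
`⟨Z g, φ⟩ = (1/2π) Σ_{n∈K} (1/n) [(∫_S g(τ) n^{-iτ} dτ) conj(∫_S φ(τ) n^{-iτ} dτ)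
  + (∫_S g(τ) n^{iτ} dτ) conj(∫_S φ(τ) n^{iτ} dτ)]`,
which is the weak form of `(Z g)(t) = (1/2π) Σ_{n∈K} (1/n) [(∫_S g(τ) n^{-iτ} dτ) n^{it}
  + (∫_S g(τ) n^{iτ} dτ) n^{-it}]` for `t ∈ S`. -/
def IsZetaOp (K : Set ℕ) (S : Set ℝ)
    (Z : Lp ℂ 2 (mu S) →L[ℂ] Lp ℂ 2 (mu S)) : Prop :=
  ∀ g φ : Lp ℂ 2 (mu S),
    (∫ t in S, (Z g) t * conj (φ t))
      = (1 / (2 * (Real.pi : ℂ))) *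
        ∑' n : K, (1 / ((n : ℕ) : ℂ)) *
          (coeff S g (Real.log ((n : ℕ) : ℝ)) * conj (coeff S φ (Real.log ((n : ℕ) : ℝ)))
            + coeff S g (-Real.log ((n : ℕ) : ℝ)) * conj (coeff S φ (-Real.log ((n : ℕ) : ℝ))))

/-- Defining (weak) property of the operator `g ↦ χ_S ⬝ F⁻¹(χ_L ⬝ F g)` on `L²(S)`:
tested against any `φ ∈ L²(S)` it satisfies `⟨M g, φ⟩ = ∫_L (F g)(ξ) conj((F φ)(ξ)) dξ`,
where `F` is the Fourier transform `F g (ξ) = (2π)^{-1/2} ∫ g(τ) e^{-iξτ} dτ`. -/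
def IsMultOp (L : Set ℝ) (S : Set ℝ)
    (M : Lp ℂ 2 (mu S) →L[ℂ] Lp ℂ 2 (mu S)) : Prop :=
  ∀ g φ : Lp ℂ 2 (mu S),
    (∫ t in S, (M g) t * conj (φ t))
      = (1 / (2 * (Real.pi : ℂ))) * ∫ ξ in L, coeff S g ξ * conj (coeff S φ ξ)

/-- A map between normed spaces is bounded below in norm. -/
def BddBelowOp {E F : Type*} [NormedAddCommGroup E] [NormedAddCommGroup F]
    (Z : E → F) : Prop :=
  ∃ c : ℝ, 0 < c ∧ ∀ g : E, c * ‖g‖ ≤ ‖Z g‖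

/-- The multiplicative semigroup of positive integers generated by a set `P` of primes:
the positive integers all of whose prime factors lie in `P` (including `1`). -/
def genBy (P : Set ℕ) : Set ℕ := {n : ℕ | 0 < n ∧ ∀ p : ℕ, p.Prime → p ∣ n → p ∈ P}

/-- The primes not belonging to `Q`. -/
def primesNotIn (Q : Set ℕ) : Set ℕ := {p : ℕ | p.Prime ∧ p ∉ Q}

/-- `ζ_J(1 + it) = Σ_{n ∈ J} n^{-1-it}` on the abscissa `Re s = 1`. -/
def zetaLine (J : Set ℕ) (t : ℝ) : ℂ := ∑' n : J, ((n : ℕ) : ℂ) ^ (-(1 + Complex.I * t))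

/-! For `ξ > δ` only the positive half of `L` meets `(ξ - δ, ξ)`, and that half is the disjoint
union of the intervals `[log n, log (n + 1))`, `n ∈ K`, whose lengths lie between `1 / (n + 1)`
and `1 / n`. The intervals with `e^(ξ-δ) < n ≤ e^ξ - 1` lie inside the window and have length at
least `e^(-ξ)`; those meeting it have `e^(ξ-δ) - 1 < n ≤ e^ξ` and length at most
`1 / (e^(ξ-δ) - 1)`. Each family has `π_K(e^ξ) - π_K(e^(ξ-δ)) ± 1` members, so with `g(ξ)` the
counting ratio,
`g(ξ) - e^(-ξ) ≤ |L ∩ (ξ-δ, ξ)|` and `|L ∩ (ξ-δ, ξ)| (e^(-δ) - e^(-ξ)) ≤ g(ξ) + e^(-ξ)`.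
Since `e^(-ξ) → 0`, an eventual positive lower bound for either side gives one for the other. -/

open Real

theorem Filter.liminf_pos_iff {α : Type*} {l : Filter α} {f : α → ℝ}
    (hb : IsBoundedUnder (· ≥ ·) l f) (hc : IsCoboundedUnder (· ≥ ·) l f) :
    0 < liminf f l ↔ ∃ c > 0, ∀ᶠ x in l, c ≤ f x := by
  refine ⟨fun h => ⟨liminf f l / 2, half_pos h, ?_⟩,
    fun ⟨c, hc₀, hcf⟩ => hc₀.trans_le (le_liminf_of_le hc hcf)⟩
  exact (eventually_lt_of_lt_liminf (half_lt_self h) hb).mono fun _ => le_of_lt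

theorem finite_inter_natCast_preimage_Ioc (K : Set ℕ) (a b : ℝ) :
    (K ∩ Nat.cast ⁻¹' Ioc a b).Finite :=
  (finite_Iic ⌊b⌋₊).subset fun _ hn => Nat.le_floor hn.2.2

theorem countK_sub_countK (K : Set ℕ) {x y : ℝ} (h : x ≤ y) :
    countK K y - countK K x = (K ∩ Nat.cast ⁻¹' Ioc x y).ncard := by
  have hfin : (K ∩ Nat.cast ⁻¹' Iic x).Finite :=
    (finite_Iic ⌊x⌋₊).subset fun _ hn => Nat.le_floor hn.2
  have hdisj : Disjoint (K ∩ Nat.cast ⁻¹' Iic x) (K ∩ Nat.cast ⁻¹' Ioc x y) :=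
    ((Iic_disjoint_Ioc le_rfl).preimage _).mono inter_subset_right inter_subset_right
  have hunion : K ∩ {n : ℕ | (n : ℝ) ≤ y}
      = (K ∩ Nat.cast ⁻¹' Iic x) ∪ (K ∩ Nat.cast ⁻¹' Ioc x y) := by
    rw [← inter_union_distrib_left, ← preimage_union, Iic_union_Ioc_eq_Iic h]
    rfl
  rw [countK, countK, hunion,
    ncard_union_eq hdisj hfin (finite_inter_natCast_preimage_Ioc K x y)]
  push_cast
  exact add_sub_cancel_left _ _

theorem ncard_inter_natCast_preimage_Ioc_le_add (K : Set ℕ) (a b c : ℝ) :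
    (K ∩ Nat.cast ⁻¹' Ioc a c).ncard
      ≤ (K ∩ Nat.cast ⁻¹' Ioc a b).ncard + (K ∩ Nat.cast ⁻¹' Ioc b c).ncard := by
  refine (ncard_le_ncard ?_ ((finite_inter_natCast_preimage_Ioc K a b).union
    (finite_inter_natCast_preimage_Ioc K b c))).trans (ncard_union_le _ _)
  rw [← inter_union_distrib_left, ← preimage_union]
  exact inter_subset_inter_right _ (preimage_mono Ioc_subset_Ioc_union_Ioc)

theorem ncard_inter_natCast_preimage_Ioc_sub_one_le (K : Set ℕ) (t : ℝ) :
    (K ∩ Nat.cast ⁻¹' Ioc (t - 1) t).ncard ≤ 1 := by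
  refine (ncard_le_one (finite_inter_natCast_preimage_Ioc K _ _)).2 ?_
  rintro m ⟨-, hm₁, hm₂⟩ n ⟨-, hn₁, hn₂⟩
  have hmn : m < n + 1 := by exact_mod_cast (by linarith : (m : ℝ) < n + 1)
  have hnm : n < m + 1 := by exact_mod_cast (by linarith : (n : ℝ) < m + 1)
  omega

theorem countK_sub_countK_le_ncard_add_one (K : Set ℕ) {x y : ℝ} (h : x ≤ y) :
    countK K y - countK K x ≤ (K ∩ Nat.cast ⁻¹' Ioc x (y - 1)).ncard + 1 := by
  have h₁ := ncard_inter_natCast_preimage_Ioc_le_add K x (y - 1) y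
  have h₂ := ncard_inter_natCast_preimage_Ioc_sub_one_le K y
  rw [countK_sub_countK K h]
  exact_mod_cast h₁.trans (by omega)

theorem ncard_le_countK_sub_countK_add_one (K : Set ℕ) {x y : ℝ} (h : x ≤ y) :
    ((K ∩ Nat.cast ⁻¹' Ioc (x - 1) y).ncard : ℝ) ≤ countK K y - countK K x + 1 := by
  have h₁ := ncard_inter_natCast_preimage_Ioc_le_add K (x - 1) x y
  have h₂ := ncard_inter_natCast_preimage_Ioc_sub_one_le K x
  rw [countK_sub_countK K h]
  exact_mod_cast h₁.trans (by omega)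

theorem Real.monotone_log_natCast : Monotone fun n : ℕ => log n := by
  intro m n h
  rcases m.eq_zero_or_pos with rfl | hm
  · simpa using log_natCast_nonneg n
  · exact log_le_log (by exact_mod_cast hm) (by exact_mod_cast h)

theorem pairwiseDisjoint_Ico_log (s : Set ℕ) :
    s.PairwiseDisjoint fun n : ℕ => Ico (log n) (log (n + 1)) := by
  have h := Real.monotone_log_natCast.pairwise_disjoint_on_Ico_succ
  simp only [Order.succ_eq_add_one, Nat.cast_add_one] at h
  exact h.set_pairwise s

theorem inv_add_one_le_log_add_one_sub_log {x : ℝ} (hx : 0 < x) :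
    (x + 1)⁻¹ ≤ log (x + 1) - log x := by
  have h := one_sub_inv_le_log_of_pos (by positivity : 0 < (x + 1) / x)
  rw [log_div (by positivity) hx.ne'] at h
  convert h using 1
  field_simp
  ring

theorem log_add_one_sub_log_le_inv {x : ℝ} (hx : 0 < x) :
    log (x + 1) - log x ≤ x⁻¹ := by
  have h := log_le_sub_one_of_pos (by positivity : 0 < (x + 1) / x)
  rw [log_div (by positivity) hx.ne'] at h
  convert h using 1
  field_simp
  ring

theorem volume_real_biUnion_Ico_log_le {s : Set ℕ} (hs : s.Finite) {a : ℝ} (ha : 0 < a)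
    (hsa : ∀ n ∈ s, a ≤ n) :
    volume.real (⋃ n ∈ s, Ico (log n) (log (n + 1))) ≤ s.ncard * a⁻¹ := by
  lift s to Finset ℕ using hs
  simp only [Finset.mem_coe, ncard_coe_finset] at hsa ⊢
  calc volume.real (⋃ n ∈ s, Ico (log n) (log (n + 1)))
      ≤ ∑ n ∈ s, volume.real (Ico (log n) (log (n + 1))) := measureReal_biUnion_finset_le _ _
    _ ≤ ∑ _n ∈ s, a⁻¹ := by
      refine Finset.sum_le_sum fun n hn => ?_
      have hn₀ : (0 : ℝ) < n := ha.trans_le (hsa n hn)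
      rw [volume_real_Ico_of_le (log_le_log hn₀ (by linarith))]
      exact (log_add_one_sub_log_le_inv hn₀).trans (inv_anti₀ ha (hsa n hn))
    _ = s.card * a⁻¹ := by rw [Finset.sum_const, nsmul_eq_mul]

theorem le_volume_real_biUnion_Ico_log {s : Set ℕ} (hs : s.Finite) {b : ℝ}
    (hsb : ∀ n ∈ s, 0 < n ∧ (n : ℝ) + 1 ≤ b) :
    s.ncard * b⁻¹ ≤ volume.real (⋃ n ∈ s, Ico (log n) (log (n + 1))) := by
  lift s to Finset ℕ using hs
  simp only [Finset.mem_coe, ncard_coe_finset] at hsb ⊢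
  calc s.card * b⁻¹ = ∑ _n ∈ s, b⁻¹ := by rw [Finset.sum_const, nsmul_eq_mul]
    _ ≤ ∑ n ∈ s, volume.real (Ico (log n) (log (n + 1))) := by
      refine Finset.sum_le_sum fun n hn => ?_
      have hn₀ : (0 : ℝ) < n := by exact_mod_cast (hsb n hn).1
      rw [volume_real_Ico_of_le (log_le_log hn₀ (by linarith))]
      exact (inv_anti₀ (by positivity) (hsb n hn).2).trans
        (inv_add_one_le_log_add_one_sub_log hn₀)
    _ = volume.real (⋃ n ∈ s, Ico (log n) (log (n + 1))) :=
      (measureReal_biUnion_finset (pairwiseDisjoint_Ico_log _) (fun _ _ => measurableSet_Ico)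
        fun _ _ => measure_Ico_lt_top.ne).symm

theorem biUnion_Ico_log_subset_Lset_inter_Ioo (K : Set ℕ) (a b : ℝ) :
    ⋃ n ∈ K ∩ Nat.cast ⁻¹' Ioc (exp a) (exp b - 1), Ico (log n) (log (n + 1))
      ⊆ Lset K ∩ Ioo a b := by
  simp only [subset_def, mem_iUnion₂]
  rintro x ⟨n, ⟨hnK, han, hnb⟩, hx⟩
  have hn₀ : (0 : ℝ) < n := (exp_pos a).trans han
  refine ⟨mem_iUnion₂.2 ⟨n, hnK, Or.inr hx⟩, ?_, ?_⟩
  · exact ((lt_log_iff_exp_lt hn₀).2 han).trans_le hx.1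
  · exact hx.2.trans_le ((log_le_iff_le_exp (by positivity)).2 (by linarith))

theorem Lset_inter_Ioo_subset_biUnion_Ico_log (K : Set ℕ) {a : ℝ} (ha : 0 ≤ a) (b : ℝ) :
    Lset K ∩ Ioo a b
      ⊆ ⋃ n ∈ K ∩ Nat.cast ⁻¹' Ioc (exp a - 1) (exp b), Ico (log n) (log (n + 1)) := by
  rintro x ⟨hxL, hax, hxb⟩
  obtain ⟨n, hnK, hneg | hx⟩ := mem_iUnion₂.1 hxL
  · linarith [hneg.2, log_natCast_nonneg n]
  refine mem_iUnion₂.2 ⟨n, ⟨hnK, ?_, ?_⟩, hx⟩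
  · have : exp a < (n : ℝ) + 1 :=
      (lt_log_iff_exp_lt (by positivity)).1 (hax.trans hx.2)
    linarith
  · exact (le_exp_log _).trans (exp_le_exp.2 (hx.1.trans hxb.le))

section Window

variable (K : Set ℕ) {δ : ℝ}

theorem volume_real_Lset_inter_Ioo_le (hδ : 0 ≤ δ) (ξ : ℝ) :
    volume.real (Lset K ∩ Ioo (ξ - δ) ξ) ≤ δ :=
  (measureReal_mono inter_subset_right measure_Ioo_lt_top.ne).trans_eq
    ((volume_real_Ioo_of_le (by linarith)).trans (by ring))

theorem countK_sub_countK_div_exp_nonneg (hδ : 0 ≤ δ) (ξ : ℝ) :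
    0 ≤ (countK K (exp ξ) - countK K (exp (ξ - δ))) / exp ξ := by
  rw [countK_sub_countK K (exp_le_exp.2 (by linarith))]
  positivity

theorem sub_exp_neg_le_volume_real_Lset_inter_Ioo (hδ : 0 ≤ δ) (ξ : ℝ) :
    (countK K (exp ξ) - countK K (exp (ξ - δ))) / exp ξ - exp (-ξ)
      ≤ volume.real (Lset K ∩ Ioo (ξ - δ) ξ) := by
  set A := K ∩ Nat.cast ⁻¹' Ioc (exp (ξ - δ)) (exp ξ - 1)
  have hcount : countK K (exp ξ) - countK K (exp (ξ - δ)) ≤ A.ncard + 1 :=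
    countK_sub_countK_le_ncard_add_one K (exp_le_exp.2 (by linarith))
  have hvol : A.ncard * (exp ξ)⁻¹ ≤ volume.real (Lset K ∩ Ioo (ξ - δ) ξ) :=
    (le_volume_real_biUnion_Ico_log (finite_inter_natCast_preimage_Ioc K _ _) fun n hn =>
      ⟨by exact_mod_cast (exp_pos _).trans hn.2.1, by linarith [hn.2.2]⟩).trans
    (measureReal_mono (biUnion_Ico_log_subset_Lset_inter_Ioo K _ _)
      ((measure_mono inter_subset_right).trans_lt measure_Ioo_lt_top).ne)
  calc (countK K (exp ξ) - countK K (exp (ξ - δ))) / exp ξ - exp (-ξ)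
      ≤ (A.ncard + 1) * (exp ξ)⁻¹ - (exp ξ)⁻¹ := by
        rw [exp_neg, div_eq_mul_inv]
        gcongr
    _ = A.ncard * (exp ξ)⁻¹ := by ring
    _ ≤ _ := hvol

theorem volume_real_Lset_inter_Ioo_mul_le (hδ : 0 ≤ δ) (hξ : δ < ξ) :
    volume.real (Lset K ∩ Ioo (ξ - δ) ξ) * (exp (-δ) - exp (-ξ))
      ≤ (countK K (exp ξ) - countK K (exp (ξ - δ))) / exp ξ + exp (-ξ) := by
  set B := K ∩ Nat.cast ⁻¹' Ioc (exp (ξ - δ) - 1) (exp ξ)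
  have hB : B.Finite := finite_inter_natCast_preimage_Ioc K _ _
  have hpos : 0 < exp (ξ - δ) - 1 := by linarith [one_lt_exp_iff.2 (sub_pos.2 hξ)]
  have hcount : (B.ncard : ℝ) ≤ countK K (exp ξ) - countK K (exp (ξ - δ)) + 1 :=
    ncard_le_countK_sub_countK_add_one K (exp_le_exp.2 (by linarith))
  have hvol : volume.real (Lset K ∩ Ioo (ξ - δ) ξ) ≤ B.ncard * (exp (ξ - δ) - 1)⁻¹ :=
    (measureReal_mono (Lset_inter_Ioo_subset_biUnion_Ico_log K (by linarith) ξ)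
      (measure_biUnion_lt_top hB fun _ _ => measure_Ico_lt_top).ne).trans
    (volume_real_biUnion_Ico_log_le hB hpos fun n hn => hn.2.1.le)
  have hexp : exp (ξ - δ) - 1 = exp ξ * (exp (-δ) - exp (-ξ)) := by
    rw [mul_sub, ← exp_add, ← exp_add, add_neg_cancel, exp_zero, ← sub_eq_add_neg]
  have hD : 0 < exp (-δ) - exp (-ξ) := sub_pos.2 (exp_lt_exp.2 (by linarith))
  calc volume.real (Lset K ∩ Ioo (ξ - δ) ξ) * (exp (-δ) - exp (-ξ))
      ≤ B.ncard * (exp (ξ - δ) - 1)⁻¹ * (exp (-δ) - exp (-ξ)) := by gcongr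
    _ = B.ncard * (exp ξ)⁻¹ := by
        rw [hexp]
        field_simp
    _ ≤ (countK K (exp ξ) - countK K (exp (ξ - δ)) + 1) * (exp ξ)⁻¹ := by gcongr
    _ = (countK K (exp ξ) - countK K (exp (ξ - δ))) / exp ξ + exp (-ξ) := by
        rw [exp_neg]
        ring

end Window

theorem statement4_general (K : Set ℕ) (δ : ℝ) (hδ : 0 < δ) :
    (0 < Filter.liminf (fun ξ : ℝ => (volume (Lset K ∩ Ioo (ξ - δ) ξ)).toReal) atTop)
      ↔ 0 < Filter.liminf
          (fun ξ : ℝ => (countK K (Real.exp ξ) - countK K (Real.exp (ξ - δ))) / Real.exp ξ)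
          atTop := by
  simp only [← measureReal_def]
  set m := fun ξ : ℝ => volume.real (Lset K ∩ Ioo (ξ - δ) ξ)
  set g := fun ξ : ℝ => (countK K (exp ξ) - countK K (exp (ξ - δ))) / exp ξ
  have hlow : ∀ ξ, g ξ - exp (-ξ) ≤ m ξ :=
    sub_exp_neg_le_volume_real_Lset_inter_Ioo K hδ.le
  have hupp : ∀ ξ, δ < ξ → m ξ * (exp (-δ) - exp (-ξ)) ≤ g ξ + exp (-ξ) :=
    fun _ => volume_real_Lset_inter_Ioo_mul_le K hδ.le
  have hm_le : ∀ ξ, m ξ ≤ δ := volume_real_Lset_inter_Ioo_le K hδ.le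
  have hg_nonneg : ∀ ξ, 0 ≤ g ξ := countK_sub_countK_div_exp_nonneg K hδ.le
  have hexp_le : ∀ ε > 0, ∀ᶠ ξ in atTop, exp (-ξ) ≤ ε := fun ε hε =>
    tendsto_exp_neg_atTop_nhds_zero.eventually (ge_mem_nhds hε)
  rw [liminf_pos_iff (isBoundedUnder_of_eventually_ge (.of_forall fun _ => measureReal_nonneg))
      (isCoboundedUnder_ge_of_eventually_le _ (.of_forall hm_le)),
    liminf_pos_iff (isBoundedUnder_of_eventually_ge (.of_forall hg_nonneg))
      (isCoboundedUnder_ge_of_eventually_le (x := δ + 1) _ ((hexp_le 1 one_pos).mono fun ξ h => by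
        linarith [hlow ξ, hm_le ξ]))]
  constructor
  · rintro ⟨c, hc, hcm⟩
    refine ⟨c * exp (-δ) / 2, by positivity, ?_⟩
    filter_upwards [hcm, eventually_gt_atTop δ,
      hexp_le (c * exp (-δ) / (2 * (c + 1))) (by positivity)] with ξ hcξ hξ hε
    have hD : 0 ≤ exp (-δ) - exp (-ξ) := sub_nonneg.2 (exp_le_exp.2 (by linarith))
    have hsmall : (c + 1) * exp (-ξ) ≤ c * exp (-δ) / 2 := by
      rw [le_div_iff₀ (by positivity : (0 : ℝ) < 2 * (c + 1))] at hε
      linarith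
    linarith [hupp ξ hξ, mul_le_mul_of_nonneg_right hcξ hD]
  · rintro ⟨c, hc, hcg⟩
    refine ⟨c / 2, half_pos hc, ?_⟩
    filter_upwards [hcg, hexp_le (c / 2) (half_pos hc)] with ξ hcξ hε
    linarith [hlow ξ]

/-- For `K` a set of positive integers,
`L = ⋃_{n∈K} ((−log(n+1), −log n] ∪ [log n, log(n+1)))` and `δ > 0`:
`liminf_{ξ→∞} |L ∩ (ξ−δ, ξ)| > 0` iff `liminf_{ξ→∞} (π_K(e^ξ) − π_K(e^{ξ−δ}))/e^ξ > 0`. -/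
theorem statement4 (K : Set ℕ) (hK : ∀ n ∈ K, 0 < n) (δ : ℝ) (hδ : 0 < δ) :
    (0 < Filter.liminf (fun ξ : ℝ => (volume (Lset K ∩ Ioo (ξ - δ) ξ)).toReal) atTop)
      ↔ 0 < Filter.liminf
          (fun ξ : ℝ => (countK K (Real.exp ξ) - countK K (Real.exp (ξ - δ))) / Real.exp ξ)
          atTop :=
  statement4_general K δ hδ
end
end

section
/- Let I ⊂ ℝ be a bounded interval and let g ∈ L²(I) with g ≠ 0 (as an element of L²). If K is a set of positive integers such that the Fourier transform ĝ = F g (which extends to an entire function of exponential type) satisfies ĝ(log n) = 0 for every n ∈ K, then Σ_{n∈K} 1/n < ∞. -/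
open MeasureTheory Set Filter Topology ComplexConjugate

noncomputable section

/-!
The function `z ↦ ∫_I g(τ) e^{-izτ} dτ` is entire of exponential type. It does not vanish
identically on `ℝ`: its values at `2πk/|I|` are, up to a factor, the Fourier coefficients of `g`
on `I`, and Parseval's identity would otherwise force `g = 0`. Jensen's inequality on discs of
radius `O(log n)` around a real point where it does not vanish then bounds the number of its zeros
`log m` (`m ∈ K`, `m ≤ n`) by `A + B log n`. Hence the `k`-th element of `K` grows at least
geometrically in `k`, and `Σ_{n∈K} 1/n` is dominated by a geometric series.
-/

open Complex in
def fourierLaplace (S : Set ℝ) (g : ℝ → ℂ) (z : ℂ) : ℂ :=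
  ∫ τ in S, g τ * cexp (-(I * z * τ))

theorem fourierLaplace_ofReal (S : Set ℝ) (g : ℝ → ℂ) (x : ℝ) :
    fourierLaplace S g x = coeff S g x :=
  rfl

section FourierLaplace

open Complex Metric

variable {S : Set ℝ} {g : ℝ → ℂ} {c : ℝ}

theorem norm_cexp_neg_I_mul_le (z : ℂ) {τ : ℝ} (hτ : |τ| ≤ c) :
    ‖cexp (-(I * z * τ))‖ ≤ Real.exp (c * ‖z‖) := by
  rw [norm_exp, Real.exp_le_exp]
  calc (-(I * z * τ)).re = z.im * τ := by simp
    _ ≤ |z.im| * |τ| := by rw [← abs_mul]; exact le_abs_self _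
    _ ≤ ‖z‖ * c := mul_le_mul (abs_im_le_norm z) hτ (abs_nonneg _) (norm_nonneg _)
    _ = c * ‖z‖ := mul_comm _ _

theorem integrableOn_mul_cexp (hS : MeasurableSet S) (hSc : ∀ τ ∈ S, |τ| ≤ c)
    (hg : IntegrableOn g S) (z : ℂ) :
    IntegrableOn (fun τ : ℝ => g τ * cexp (-(I * z * τ))) S := by
  refine (hg.norm.mul_const (Real.exp (c * ‖z‖))).mono' ?_ ?_
  · exact hg.aestronglyMeasurable.mul (by fun_prop)
  · filter_upwards [ae_restrict_mem hS] with τ hτ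
    rw [norm_mul]
    exact mul_le_mul_of_nonneg_left (norm_cexp_neg_I_mul_le z (hSc τ hτ)) (norm_nonneg _)

theorem norm_fourierLaplace_le (hS : MeasurableSet S) (hSc : ∀ τ ∈ S, |τ| ≤ c)
    (hg : IntegrableOn g S) (z : ℂ) :
    ‖fourierLaplace S g z‖ ≤ (∫ τ in S, ‖g τ‖) * Real.exp (c * ‖z‖) := by
  rw [← integral_mul_const]
  refine norm_integral_le_of_norm_le (hg.norm.mul_const _) ?_
  filter_upwards [ae_restrict_mem hS] with τ hτ
  rw [norm_mul]
  exact mul_le_mul_of_nonneg_left (norm_cexp_neg_I_mul_le z (hSc τ hτ)) (norm_nonneg _)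

theorem differentiable_fourierLaplace (hS : MeasurableSet S) (hSc : ∀ τ ∈ S, |τ| ≤ c)
    (hg : IntegrableOn g S) : Differentiable ℂ (fourierLaplace S g) := by
  intro z₀
  have hderiv : ∀ τ : ℝ, ∀ z : ℂ, HasDerivAt (fun z => g τ * cexp (-(I * z * τ)))
      (g τ * (-(I * τ)) * cexp (-(I * z * τ))) z := by
    intro τ z
    simp only [show ∀ w : ℂ, -(I * w * τ) = w * -(I * τ) from fun w => by ring]
    exact (((hasDerivAt_mul_const _).cexp).const_mul (g τ)).congr_deriv (by ring)
  have hbound : ∀ᵐ τ ∂(volume.restrict S), ∀ z ∈ ball z₀ 1,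
      ‖g τ * (-(I * τ)) * cexp (-(I * z * τ))‖ ≤ ‖g τ‖ * (c * Real.exp (c * (‖z₀‖ + 1))) := by
    filter_upwards [ae_restrict_mem hS] with τ hτ z hz
    have hz : ‖z‖ ≤ ‖z₀‖ + 1 := by
      linarith [norm_le_norm_add_norm_sub' z z₀, mem_ball_iff_norm.mp hz]
    have hc : 0 ≤ c := (abs_nonneg τ).trans (hSc τ hτ)
    rw [norm_mul, norm_mul, mul_assoc, norm_neg, norm_mul, norm_I, one_mul, norm_real,
      Real.norm_eq_abs]
    gcongr
    · exact hSc τ hτ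
    · exact (norm_cexp_neg_I_mul_le z (hSc τ hτ)).trans (by gcongr)
  exact (hasDerivAt_integral_of_dominated_loc_of_deriv_le (ball_mem_nhds z₀ one_pos)
    (Eventually.of_forall fun z => (integrableOn_mul_cexp hS hSc hg z).aestronglyMeasurable)
    (integrableOn_mul_cexp hS hSc hg z₀)
    ((hg.aestronglyMeasurable.mul (by fun_prop)).mul (by fun_prop)) hbound
    (hg.norm.mul_const _) (ae_of_all _ fun τ z _ => hderiv τ z)).2.differentiableAt

end FourierLaplace

theorem fourierCoeffOn_eq_coeff {a b : ℝ} (hab : a < b) (f : ℝ → ℂ) (n : ℤ) :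
    fourierCoeffOn hab f n = (1 / (b - a)) • coeff (Ioo a b) f (2 * Real.pi * n / (b - a)) := by
  rw [fourierCoeffOn_eq_integral, intervalIntegral.integral_of_le hab.le,
    integral_Ioc_eq_integral_Ioo, coeff]
  congr 1
  refine setIntegral_congr_fun measurableSet_Ioo fun x _ => ?_
  have hba : ((b - a : ℝ) : ℂ) ≠ 0 := by exact_mod_cast (sub_pos.mpr hab).ne'
  rw [fourier_coe_apply, smul_eq_mul, mul_comm]
  congr 2
  push_cast
  field_simp

theorem eq_zero_of_coeff_eq_zero {a b : ℝ} (hab : a < b)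
    (g : Lp ℂ 2 (mu (Ioo a b)))
    (h : ∀ n : ℤ, coeff (Ioo a b) g (2 * Real.pi * n / (b - a)) = 0) : g = 0 := by
  have hIoc : volume.restrict (Ioo a b) = volume.restrict (Ioc a b) :=
    Measure.restrict_congr_set Ioo_ae_eq_Ioc
  have hL2 : MemLp g 2 (volume.restrict (Ioc a b)) := by rw [← hIoc]; exact Lp.memLp g
  have hparseval := hasSum_sq_fourierCoeffOn hab hL2
  simp only [fourierCoeffOn_eq_coeff, h, smul_zero, norm_zero, ne_eq, OfNat.ofNat_ne_zero,
    not_false_eq_true, zero_pow] at hparseval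
  have hint : ∫ x in Ioc a b, ‖g x‖ ^ 2 = 0 := by
    have := hasSum_zero.unique hparseval
    rw [intervalIntegral.integral_of_le hab.le] at this
    exact (mul_eq_zero.mp this.symm).resolve_left (inv_ne_zero (sub_pos.mpr hab).ne')
  have hae : (g : ℝ → ℂ) =ᵐ[volume.restrict (Ioo a b)] 0 := by
    rw [hIoc]
    filter_upwards [(integral_eq_zero_iff_of_nonneg (fun x => by positivity)
      (hL2.integrable_norm_pow two_ne_zero)).mp hint] with x hx
    simpa using hx
  exact Lp.ext (hae.trans (Lp.coeFn_zero ℂ 2 _).symm)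

section Jensen

open Metric

theorem AnalyticOnNhd.card_le_finsum_divisor {f : ℂ → ℂ} {U : Set ℂ} (hf : AnalyticOnNhd ℂ f U)
    (hU : IsPreconnected U) {c : ℂ} (hc : c ∈ U) (hfc : f c ≠ 0)
    (hsupp : (MeromorphicOn.divisor f U).support.Finite) {T : Finset ℂ} (hTU : ↑T ⊆ U)
    (hT : ∀ w ∈ T, f w = 0) :
    (T.card : ℤ) ≤ ∑ᶠ u, MeromorphicOn.divisor f U u := by
  classical
  have hind : (T.card : ℤ) = ∑ᶠ u, if u ∈ T then (1 : ℤ) else 0 := by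
    rw [finsum_eq_sum_of_support_subset _ (s := T) fun u hu => by by_contra h; simp_all]
    simp only [Finset.sum_ite_mem, Finset.inter_self, Finset.sum_const, Int.nsmul_eq_mul, mul_one]
  rw [hind]
  refine finsum_le_finsum' (T.finite_toSet.subset fun u hu => by by_contra h; simp_all) hsupp
    fun u => ?_
  split_ifs with hu
  · have hfin : analyticOrderAt f u ≠ ⊤ :=
      analyticOrderAt_ne_top_of_isPreconnected hf hU hc (hTU hu)
        (by simp [(hf c hc).analyticOrderAt_eq_zero.mpr hfc])
    have hpos : analyticOrderAt f u ≠ 0 := by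
      simp [analyticOrderAt_eq_zero, hf u (hTU hu), hT u hu]
    obtain ⟨k, hk⟩ := ENat.ne_top_iff_exists.mp hfin
    rw [MeromorphicOn.AnalyticOnNhd.divisor_apply hf (hTU hu), ← hk]
    rw [← hk] at hpos
    simpa [Nat.one_le_iff_ne_zero] using hpos
  · exact MeromorphicOn.AnalyticOnNhd.divisor_nonneg hf u

theorem AnalyticOnNhd.card_zeros_le {f : ℂ → ℂ} {c : ℂ} {r R M : ℝ} (hr : 0 < r) (hrR : r < R)
    (hM : 1 ≤ M) (hf : AnalyticOnNhd ℂ f (closedBall c R)) (hfc : f c ≠ 0)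
    (hbound : ∀ z ∈ sphere c R, ‖f z‖ ≤ M) {T : Finset ℂ} (hT : ↑T ⊆ closedBall c r)
    (hT0 : ∀ w ∈ T, f w = 0) :
    (T.card : ℝ) ≤ Real.log (M / ‖f c‖) / Real.log (R / r) := by
  have hR : 0 < R := hr.trans hrR
  rw [← abs_of_pos hR] at hf hbound
  have hjensen := AnalyticOnNhd.sum_divisor_le (abs_pos_of_pos hr)
    (by rwa [abs_of_pos hr, abs_of_pos hR]) hM hf hfc hbound
  rw [abs_of_pos hr] at hjensen
  rw [abs_of_pos hR] at hf
  have hcard := (hf.mono (closedBall_subset_closedBall hrR.le)).card_le_finsum_divisor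
    (convex_closedBall c r).isPreconnected (mem_closedBall_self hr.le) hfc
    ((MeromorphicOn.divisor f _).finiteSupport (isCompact_closedBall c r)) hT hT0
  exact le_trans (by exact_mod_cast hcard) hjensen

end Jensen

section Counting

open Metric Real

theorem strictMonoOn_countK (K : Set ℕ) : StrictMonoOn (fun n : ℕ => countK K n) K := by
  intro n _ m hm hnm
  have hnm' : (n : ℝ) < m := by exact_mod_cast hnm
  simp only [countK, Nat.cast_lt]
  refine Set.ncard_lt_ncard ⟨fun k hk => ⟨hk.1, ?_⟩, fun hsub => ?_⟩
    ((Set.finite_Iic m).subset fun k hk => by exact_mod_cast hk.2)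
  · exact (show (k : ℝ) ≤ n from hk.2).trans hnm'.le
  · exact (show (m : ℝ) ≤ n from (hsub ⟨hm, show (m : ℝ) ≤ m from le_rfl⟩).2).not_gt hnm'

theorem summable_one_div_of_countK_le_log (K : Set ℕ) {A B : ℝ}
    (hcount : ∀ n ∈ K, countK K n ≤ A + B * log n) :
    Summable fun n : K => (1 : ℝ) / ((n : ℕ) : ℝ) := by
  wlog hB : 0 < B generalizing B
  · exact this (B := max B 1) (fun n hn => (hcount n hn).trans (by gcongr; exact le_max_left _ _))
      (by positivity)
  have hrank : Function.Injective fun n : K => (K ∩ {m : ℕ | (m : ℝ) ≤ (n : ℕ)}).ncard :=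
    fun n m h => Subtype.ext ((strictMonoOn_countK K).injOn n.2 m.2
      (by simp only [countK]; exact_mod_cast h))
  -- `countK K n ≤ A + B log n` says `1 / n ≤ e^{A/B} q^{countK K n}` with `q = e^{-1/B} < 1`.
  set q := exp (-B⁻¹)
  have hgeom : Summable fun k : ℕ => exp (A / B) * q ^ k :=
    (summable_geometric_of_lt_one (exp_pos _).le
      (exp_lt_one_iff.mpr (by simpa using hB))).mul_left _
  refine (hgeom.comp_injective hrank).of_nonneg_of_le (fun n => by positivity) fun ⟨n, hn⟩ => ?_
  rcases Nat.eq_zero_or_pos n with rfl | hpos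
  · rw [Nat.cast_zero, div_zero]
    exact mul_nonneg (exp_pos _).le (pow_nonneg (exp_pos _).le _)
  have hn' : (0 : ℝ) < n := by exact_mod_cast hpos
  calc (1 : ℝ) / n = exp (-log n) := by rw [exp_neg, exp_log hn', one_div]
    _ ≤ exp (A / B - B⁻¹ * countK K n) := by
        gcongr
        have h := mul_le_mul_of_nonneg_left (hcount n hn) (inv_nonneg.mpr hB.le)
        rw [mul_add, ← mul_assoc, inv_mul_cancel₀ hB.ne', one_mul] at h
        rw [div_eq_mul_inv]
        linarith
    _ = _ := by simp only [Function.comp, countK, q, ← exp_nat_mul, ← exp_add]; ring_nf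

theorem exists_finset_card_eq_countK {K : Set ℕ} (hK : ∀ n ∈ K, 0 < n) (x : ℝ) :
    ∃ T : Finset ℂ, countK K x = T.card ∧ ∀ w ∈ T, ∃ m ∈ K, (m : ℝ) ≤ x ∧ w = log m := by
  have hfin : (K ∩ {m : ℕ | (m : ℝ) ≤ x}).Finite :=
    (Set.finite_Iic ⌊x⌋₊).subset fun m hm => Nat.le_floor hm.2
  refine ⟨hfin.toFinset.image fun m : ℕ => ((log m : ℝ) : ℂ), ?_, ?_⟩
  · rw [countK, Set.ncard_eq_toFinset_card _ hfin, Finset.card_image_of_injOn]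
    intro m₁ hm₁ m₂ hm₂ he
    simp only [Set.Finite.coe_toFinset, Complex.ofReal_inj] at hm₁ hm₂ he
    exact_mod_cast log_injOn_pos (Set.mem_Ioi.mpr (Nat.cast_pos.mpr (hK m₁ hm₁.1)))
      (Set.mem_Ioi.mpr (Nat.cast_pos.mpr (hK m₂ hm₂.1))) he
  · simp only [Finset.mem_image, Set.Finite.mem_toFinset]
    rintro _ ⟨m, hm, rfl⟩
    exact ⟨m, hm.1, hm.2, rfl⟩

theorem exists_countK_le_log_of_exponentialType {f : ℂ → ℂ} (hf : Differentiable ℂ f) {C c : ℝ}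
    (hc : 0 ≤ c) (hbound : ∀ z, ‖f z‖ ≤ C * exp (c * ‖z‖)) {x₀ : ℂ} (hx₀ : f x₀ ≠ 0)
    {K : Set ℕ} (hK : ∀ n ∈ K, 0 < n) (hzero : ∀ n ∈ K, f (log n) = 0) :
    ∃ A B : ℝ, ∀ n ∈ K, countK K n ≤ A + B * log n := by
  have hC : 0 ≤ C := by simpa using (norm_nonneg _).trans (hbound 0)
  refine ⟨(log (C + 1) + c * (3 * ‖x₀‖ + 2) - log ‖f x₀‖) / log 2, 2 * c / log 2, fun n hn => ?_⟩
  obtain ⟨T, hcard, hTlog⟩ := exists_finset_card_eq_countK hK n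
  set r := ‖x₀‖ + log n + 1
  have hr : 0 < r := by positivity
  have hT : ↑T ⊆ closedBall x₀ r := by
    intro w hw
    obtain ⟨m, hm, hmn, rfl⟩ := hTlog w hw
    have hlogm : |log m| ≤ log n := by
      rw [abs_of_nonneg (log_natCast_nonneg m)]
      exact log_le_log (Nat.cast_pos.mpr (hK m hm)) hmn
    rw [mem_closedBall, dist_eq_norm]
    calc ‖(log m : ℂ) - x₀‖ ≤ ‖(log m : ℂ)‖ + ‖x₀‖ := norm_sub_le _ _
      _ ≤ r := by rw [Complex.norm_real, norm_eq_abs]; linarith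
  have hT0 : ∀ w ∈ T, f w = 0 := fun w hw => by
    obtain ⟨m, hm, -, rfl⟩ := hTlog w hw
    exact hzero m hm
  set M := (C + 1) * exp (c * (‖x₀‖ + 2 * r))
  have hM : 1 ≤ M := one_le_mul_of_one_le_of_one_le (by linarith) (one_le_exp (by positivity))
  have hsphere : ∀ z ∈ sphere x₀ (2 * r), ‖f z‖ ≤ M := by
    intro z hz
    have hz' : ‖z‖ ≤ ‖x₀‖ + 2 * r := by
      linarith [norm_le_norm_add_norm_sub' z x₀, mem_sphere_iff_norm.mp hz]
    calc ‖f z‖ ≤ C * exp (c * ‖z‖) := hbound z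
      _ ≤ (C + 1) * exp (c * (‖x₀‖ + 2 * r)) := by gcongr; linarith
  have hjensen := AnalyticOnNhd.card_zeros_le hr (by linarith : r < 2 * r) hM
    (fun z _ => hf.analyticAt z) hx₀ hsphere hT hT0
  rw [hcard]
  refine hjensen.trans (le_of_eq ?_)
  rw [mul_div_cancel_right₀ _ hr.ne', log_div (by positivity) (norm_ne_zero_iff.mpr hx₀),
    log_mul (by positivity) (exp_pos _).ne', log_exp]
  ring

end Counting

/-- If `g ∈ L²(I)` is nonzero on the bounded interval `I = (a,b)` and its
Fourier transform `ĝ(ξ) = (2π)^{-1/2} ∫_I g(τ) e^{-iξτ} dτ` vanishes at `log n` for every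
`n ∈ K`, then `Σ_{n∈K} 1/n < ∞`. -/
theorem statement5 (a b : ℝ) (hab : a < b) (g : Lp ℂ 2 (mu (Ioo a b))) (hg : g ≠ 0)
    (K : Set ℕ) (hK : ∀ n ∈ K, 0 < n)
    (hzero : ∀ n ∈ K, coeff (Ioo a b) g (Real.log n) = 0) :
    Summable fun n : K => (1 : ℝ) / ((n : ℕ) : ℝ) := by
  have : IsFiniteMeasure (mu (Ioo a b)) := by unfold mu; infer_instance
  have hint : IntegrableOn g (Ioo a b) := (Lp.memLp g).integrable one_le_two
  have hbdd : ∀ τ ∈ Ioo a b, |τ| ≤ max |a| |b| := fun τ hτ => abs_le_max_abs_abs hτ.1.le hτ.2.le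
  have hF := differentiable_fourierLaplace measurableSet_Ioo hbdd hint
  obtain ⟨x₀, hx₀⟩ : ∃ x : ℝ, fourierLaplace (Ioo a b) g x ≠ 0 := by
    simp_rw [fourierLaplace_ofReal]
    by_contra! h
    exact hg (eq_zero_of_coeff_eq_zero hab g fun n => h _)
  obtain ⟨A, B, hcount⟩ := exists_countK_le_log_of_exponentialType hF
    (le_max_of_le_left (abs_nonneg a)) (norm_fourierLaplace_le measurableSet_Ioo hbdd hint) hx₀ hK
    fun n hn => (fourierLaplace_ofReal _ _ _).trans (hzero n hn)
  exact summable_one_div_of_countK_le_log K hcount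
end
end

section
/- Let Q be a set of prime numbers, let K be the multiplicative semigroup generated by Q (the set of positive integers all of whose prime factors lie in Q, including 1), and let J be the semigroup generated by the primes not in Q. Then the limit lim_{x→∞} π_K(x)/x exists and equals lim_{σ→1⁺} 1/ζ_J(σ), where ζ_J(σ) = Σ_{n∈J} n^{−σ} (with the convention that the right-hand side is 0 when ζ_J(σ) → ∞ as σ → 1⁺). -/
open MeasureTheory Set Filter Topology ComplexConjugate

noncomputable section

/-!
The common limit is `δ = ∏_{p ∉ Q} (1 - 1/p)`, taken as the infimum of its finite subproducts.
Euler's product gives `Σ_{n ∈ J} 1/n = 1/δ` in `ℝ≥0∞`, and `ζ_J(σ) → Σ_{n ∈ J} 1/n` as `σ → 1⁺`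
because `ζ_J` is lower semicontinuous and decreasing in `σ`.

For the count, fix a finite set `F` of primes outside `Q`. Legendre's sieve counts the `n ≤ N`
with no prime factor in `F` as `N ∏_{p ∈ F} (1 - 1/p) + O(2^|F|)`. These `n` include `K ∩ [1, N]`,
and the others have a prime factor `p ∉ Q ∪ F`, so there are at most `N Σ_{p ∉ Q ∪ F} 1/p` of them.
When `δ > 0`, `Σ_{p ∉ Q} 1/p ≤ 1/δ` is finite, so this tail can be made small.
-/

open scoped ENNReal

def sifted (F : Finset ℕ) (N : ℕ) : Finset ℕ := {n ∈ Finset.Ioc 0 N | ∀ p ∈ F, ¬ p ∣ n}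

lemma sifted_insert (q : ℕ) (F : Finset ℕ) (N : ℕ) :
    sifted (insert q F) N = {n ∈ sifted F N | ¬ q ∣ n} := by
  ext n
  simp only [sifted, Finset.mem_filter, Finset.mem_insert, forall_eq_or_imp]
  tauto

lemma filter_dvd_sifted {q : ℕ} {F : Finset ℕ} (hq : q.Prime) (hF : ∀ p ∈ F, p.Prime)
    (hqF : q ∉ F) (N : ℕ) :
    {n ∈ sifted F N | q ∣ n} = (sifted F (N / q)).image (q * ·) := by
  ext n
  simp only [sifted, Finset.mem_filter, Finset.mem_Ioc, Finset.mem_image]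
  constructor
  · rintro ⟨⟨⟨hn0, hnN⟩, hnF⟩, m, rfl⟩
    refine ⟨m, ⟨⟨Nat.pos_of_mul_pos_left hn0, ?_⟩, fun p hp hpm => hnF p hp (hpm.mul_left q)⟩, rfl⟩
    exact (Nat.le_div_iff_mul_le hq.pos).2 (by linarith [mul_comm q m])
  · rintro ⟨m, ⟨⟨hm0, hmN⟩, hmF⟩, rfl⟩
    refine ⟨⟨⟨Nat.mul_pos hq.pos hm0, ?_⟩, fun p hp hpqm => hmF p hp ?_⟩, dvd_mul_right q m⟩
    · linarith [(Nat.le_div_iff_mul_le hq.pos).1 hmN, mul_comm q m]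
    · have hpq : p.Coprime q := (Nat.coprime_primes (hF p hp) hq).2 (ne_of_mem_of_not_mem hp hqF)
      exact hpq.dvd_mul_left.1 hpqm

lemma card_sifted_eq {q : ℕ} {F : Finset ℕ} (hq : q.Prime) (hF : ∀ p ∈ F, p.Prime)
    (hqF : q ∉ F) (N : ℕ) :
    (sifted F N).card = (sifted (insert q F) N).card + (sifted F (N / q)).card := by
  have h := Finset.card_filter_add_card_filter_not (s := sifted F N) (q ∣ ·)
  rw [filter_dvd_sifted hq hF hqF,
    Finset.card_image_of_injective _ (mul_right_injective₀ hq.ne_zero)] at h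
  rw [sifted_insert]
  omega

lemma prod_one_sub_natCast_inv_nonneg (F : Finset ℕ) : 0 ≤ ∏ p ∈ F, (1 - (p : ℝ)⁻¹) :=
  Finset.prod_nonneg fun _ _ => sub_nonneg.2 (Nat.cast_inv_le_one _)

lemma prod_one_sub_natCast_inv_le_one (F : Finset ℕ) : ∏ p ∈ F, (1 - (p : ℝ)⁻¹) ≤ 1 :=
  Finset.prod_le_one (fun _ _ => sub_nonneg.2 (Nat.cast_inv_le_one _))
    fun _ _ => sub_le_self _ (by positivity)

lemma abs_card_sifted_sub_le {F : Finset ℕ} (hF : ∀ p ∈ F, p.Prime) (N : ℕ) :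
    |((sifted F N).card : ℝ) - N * ∏ p ∈ F, (1 - (p : ℝ)⁻¹)| ≤ 2 ^ F.card - 1 := by
  induction F using Finset.induction_on generalizing N with
  | empty => simp [sifted]
  | insert q F hqF ih =>
    have hq := hF q (Finset.mem_insert_self q F)
    have hF' : ∀ p ∈ F, p.Prime := fun p hp => hF p (Finset.mem_insert_of_mem hp)
    set d := ∏ p ∈ F, (1 - (p : ℝ)⁻¹)
    have hsplit : ((sifted (insert q F) N).card : ℝ)
        = (sifted F N).card - (sifted F (N / q)).card := by
      rw [card_sifted_eq hq hF' hqF N]; push_cast; ring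
    -- `N / q` is truncated division: its fractional part costs an error in `[0, 1]`
    have hfloor : (((N / q : ℕ) : ℝ) ≤ N / q) ∧ (N : ℝ) / q < (N / q : ℕ) + 1 := by
      refine ⟨Nat.cast_div_le, ?_⟩
      simpa only [Nat.floor_div_eq_div] using Nat.lt_floor_add_one ((N : ℝ) / q)
    have hfrac : 0 ≤ ((N : ℝ) / q - (N / q : ℕ)) * d ∧ ((N : ℝ) / q - (N / q : ℕ)) * d ≤ 1 :=
      ⟨mul_nonneg (by linarith) (prod_one_sub_natCast_inv_nonneg F),
        mul_le_one₀ (by linarith) (prod_one_sub_natCast_inv_nonneg F)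
          (prod_one_sub_natCast_inv_le_one F)⟩
    have e₁ := abs_le.1 (ih hF' N)
    have e₂ := abs_le.1 (ih hF' (N / q))
    have hexp : (N : ℝ) * ((1 - (q : ℝ)⁻¹) * d) = N * d - N / q * d := by ring
    rw [Finset.prod_insert hqF, Finset.card_insert_of_notMem hqF, pow_succ, hsplit, hexp, abs_le]
    constructor <;> linarith [hfrac.1, hfrac.2, e₁.1, e₁.2, e₂.1, e₂.2]

lemma genBy_mono {P P' : Set ℕ} (h : P ⊆ P') : genBy P ⊆ genBy P' :=
  fun _ hn => ⟨hn.1, fun p hp hpn => h (hn.2 p hp hpn)⟩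

lemma subset_genBy {P : Set ℕ} (hP : ∀ p ∈ P, p.Prime) : P ⊆ genBy P :=
  fun p hp => ⟨(hP p hp).pos, fun _ hq hqp => (Nat.prime_dvd_prime_iff_eq hq (hP p hp)).1 hqp ▸ hp⟩

lemma genBy_coe_finset (s : Finset ℕ) : genBy ↑s = Nat.factoredNumbers s := by
  ext n
  refine ⟨fun hn => Nat.mem_factoredNumbers'.2 hn.2, fun hn => ?_⟩
  exact ⟨Nat.pos_of_ne_zero (Nat.ne_zero_of_mem_factoredNumbers hn), Nat.mem_factoredNumbers'.1 hn⟩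

lemma tsum_genBy_eq_iSup (P : Set ℕ) (f : ℕ → ℝ≥0∞) :
    ∑' n : genBy P, f n = ⨆ (F : Finset ℕ) (_ : ↑F ⊆ P), ∑' n : genBy ↑F, f n := by
  refine le_antisymm ?_ (iSup₂_le fun F hF => ENNReal.tsum_mono_subtype f (genBy_mono hF))
  rw [ENNReal.tsum_eq_iSup_sum]
  refine iSup_le fun G => ?_
  classical
  -- every finite part of `genBy P` lies in `genBy F` for the finite set `F` of its prime factors
  set F := G.biUnion fun n => (n : ℕ).primeFactors
  have hFP : ↑F ⊆ P := by
    intro p hp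
    obtain ⟨n, -, hpn⟩ := Finset.mem_biUnion.1 hp
    exact n.2.2 p (Nat.prime_of_mem_primeFactors hpn) (Nat.dvd_of_mem_primeFactors hpn)
  have hGF : ↑(G.map (Function.Embedding.subtype _)) ⊆ genBy ↑F := by
    simp only [Finset.coe_map, Function.Embedding.coe_subtype, Set.image_subset_iff]
    intro n hn
    refine ⟨n.2.1, fun p hp hpn => Finset.mem_biUnion.2 ⟨n, hn, ?_⟩⟩
    exact Nat.mem_primeFactors.2 ⟨hp, hpn, n.2.1.ne'⟩
  calc ∑ n ∈ G, f n = ∑' n : ↑(G.map (Function.Embedding.subtype _)), f n := by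
        rw [Finset.tsum_subtype, Finset.sum_map, Function.Embedding.coe_subtype]
    _ ≤ ∑' n : genBy ↑F, f n := ENNReal.tsum_mono_subtype f hGF
    _ ≤ ⨆ (F : Finset ℕ) (_ : ↑F ⊆ P), ∑' n : genBy ↑F, f n := le_iSup₂_of_le F hFP le_rfl

lemma tsum_inv_factoredNumbers {s : Finset ℕ} (hs : ∀ p ∈ s, p.Prime) :
    ∑' n : Nat.factoredNumbers s, (n : ℝ≥0∞)⁻¹ = ∏ p ∈ s, (1 - (p : ℝ≥0∞)⁻¹)⁻¹ := by
  induction s using Finset.induction_on with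
  | empty =>
    rw [Nat.factoredNumbers_empty, tsum_singleton 1 fun n : ℕ => (n : ℝ≥0∞)⁻¹]
    simp
  | insert p s hps ih =>
    have hp := hs p (Finset.mem_insert_self p s)
    have hterm : ∀ x : ℕ × Nat.factoredNumbers s,
        (((p ^ x.1 * x.2 : ℕ)) : ℝ≥0∞)⁻¹ = (p : ℝ≥0∞)⁻¹ ^ x.1 * ((x.2 : ℕ) : ℝ≥0∞)⁻¹ := by
      intro x
      push_cast
      rw [ENNReal.mul_inv (Or.inl (pow_ne_zero _ (by exact_mod_cast hp.ne_zero)))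
        (Or.inl (ENNReal.pow_ne_top (ENNReal.natCast_ne_top p))), ENNReal.inv_pow]
    rw [← (Nat.equivProdNatFactoredNumbers hp hps).tsum_eq, Finset.prod_insert hps,
      ← ih fun q hq => hs q (Finset.mem_insert_of_mem hq), ← ENNReal.tsum_geometric,
      ← ENNReal.tsum_mul_right]
    simp only [Nat.equivProdNatFactoredNumbers_apply', hterm, ← ENNReal.tsum_mul_left]
    exact ENNReal.tsum_prod
      (f := fun k (m : Nat.factoredNumbers s) => (p : ℝ≥0∞)⁻¹ ^ k * (m : ℝ≥0∞)⁻¹)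

/-- `∏_{p ∈ P} (1 - 1/p)`, as the infimum of its finite subproducts. -/
def siftedDensity (P : Set ℕ) : ℝ≥0∞ :=
  ⨅ (F : Finset ℕ) (_ : ↑F ⊆ P), ∏ p ∈ F, (1 - (p : ℝ≥0∞)⁻¹)

lemma siftedDensity_ne_top (P : Set ℕ) : siftedDensity P ≠ ⊤ :=
  ne_top_of_le_ne_top ENNReal.one_ne_top
    ((iInf₂_le ∅ (Finset.coe_empty ▸ Set.empty_subset P)).trans_eq Finset.prod_empty)

lemma inv_tsum_inv_genBy {P : Set ℕ} (hP : ∀ p ∈ P, p.Prime) :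
    (∑' n : genBy P, (n : ℝ≥0∞)⁻¹)⁻¹ = siftedDensity P := by
  rw [tsum_genBy_eq_iSup P fun n => (n : ℝ≥0∞)⁻¹, ENNReal.inv_iSup]
  refine iInf_congr fun F => ?_
  rw [ENNReal.inv_iSup]
  refine iInf_congr fun hF => ?_
  rw [genBy_coe_finset, tsum_inv_factoredNumbers fun p hp => hP p (hF hp),
    ← ENNReal.prod_inv_distrib fun _ _ _ _ _ => Or.inr (ne_top_of_le_ne_top ENNReal.one_ne_top
      tsub_le_self), inv_inv]

lemma toReal_prod_one_sub_inv {F : Finset ℕ} (hF : 0 ∉ F) :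
    (∏ p ∈ F, (1 - (p : ℝ≥0∞)⁻¹)).toReal = ∏ p ∈ F, (1 - (p : ℝ)⁻¹) := by
  rw [ENNReal.toReal_prod]
  refine Finset.prod_congr rfl fun p hp => ?_
  have hp1 : (1 : ℝ≥0∞) ≤ p := by
    exact_mod_cast Nat.one_le_iff_ne_zero.2 (ne_of_mem_of_not_mem hp hF)
  rw [ENNReal.toReal_sub_of_le (ENNReal.inv_le_one.2 hp1) ENNReal.one_ne_top, ENNReal.toReal_inv,
    ENNReal.toReal_natCast, ENNReal.toReal_one]

lemma toReal_siftedDensity_le {P : Set ℕ} (hP : 0 ∉ P) {F : Finset ℕ} (hF : ↑F ⊆ P) :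
    (siftedDensity P).toReal ≤ ∏ p ∈ F, (1 - (p : ℝ)⁻¹) := by
  rw [← toReal_prod_one_sub_inv fun h => hP (hF h)]
  refine ENNReal.toReal_mono ?_ (iInf₂_le F hF)
  exact ENNReal.prod_ne_top fun _ _ => ne_top_of_le_ne_top ENNReal.one_ne_top tsub_le_self

lemma exists_prod_lt_of_toReal_siftedDensity_lt {P : Set ℕ} (hP : 0 ∉ P) {b : ℝ}
    (hb : (siftedDensity P).toReal < b) :
    ∃ F : Finset ℕ, ↑F ⊆ P ∧ ∏ p ∈ F, (1 - (p : ℝ)⁻¹) < b := by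
  rw [← ENNReal.lt_ofReal_iff_toReal_lt (siftedDensity_ne_top P), siftedDensity] at hb
  obtain ⟨F, hb⟩ := iInf_lt_iff.1 hb
  obtain ⟨hF, hb⟩ := iInf_lt_iff.1 hb
  exact ⟨F, hF, toReal_prod_one_sub_inv (fun h => hP (hF h)) ▸ ENNReal.toReal_lt_of_lt_ofReal hb⟩

lemma exists_sum_inv_le_of_tsum_inv_genBy_ne_top {P : Set ℕ} (hP : ∀ p ∈ P, p.Prime)
    (hZ : ∑' n : genBy P, (n : ℝ≥0∞)⁻¹ ≠ ⊤) {ε : ℝ} (hε : 0 < ε) :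
    ∃ F : Finset ℕ, ↑F ⊆ P ∧ ∀ T : Finset ℕ, ↑T ⊆ P \ ↑F → ∑ p ∈ T, (p : ℝ)⁻¹ ≤ ε := by
  classical
  have hsum : Summable (P.indicator fun p : ℕ => (p : ℝ)⁻¹) := by
    rw [← summable_subtype_iff_indicator]
    have hPZ := ENNReal.tsum_mono_subtype (fun n : ℕ => (n : ℝ≥0∞)⁻¹) (subset_genBy hP)
    simpa [Function.comp_def] using ENNReal.summable_toReal (ne_top_of_le_ne_top hZ hPZ)
  obtain ⟨s, hs⟩ := hsum.vanishing (Iic_mem_nhds hε)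
  refine ⟨{p ∈ s | p ∈ P}, fun p hp => (Finset.mem_filter.1 hp).2, fun T hT => ?_⟩
  have hTs : Disjoint T s := Finset.disjoint_left.2 fun p hpT hps =>
    (hT hpT).2 (Finset.mem_filter.2 ⟨hps, (hT hpT).1⟩)
  simpa only [Finset.sum_congr rfl fun p hp => Set.indicator_of_mem (hT hp).1 _, Set.mem_Iic]
    using hs T hTs

lemma countK_eq_ncard_inter_Iic (K : Set ℕ) {x : ℝ} (hx : 0 ≤ x) :
    countK K x = (K ∩ Iic ⌊x⌋₊).ncard := by
  simp only [countK, Iic, Nat.le_floor_iff hx]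

lemma genBy_inter_Iic_subset_sifted {Q : Set ℕ} {F : Finset ℕ} (hF : ↑F ⊆ primesNotIn Q)
    (N : ℕ) : genBy Q ∩ Iic N ⊆ ↑(sifted F N) := by
  rintro n ⟨⟨hn0, hnQ⟩, hnN⟩
  simp only [sifted, Finset.coe_filter, Finset.mem_Ioc]
  exact ⟨⟨hn0, hnN⟩, fun p hp hpn => (hF hp).2 (hnQ p (hF hp).1 hpn)⟩

lemma exists_prime_dvd_of_mem_sifted {Q : Set ℕ} {F : Finset ℕ} {N n : ℕ}
    (hn : n ∈ sifted F N) (hnQ : n ∉ genBy Q) : ∃ p ∈ primesNotIn Q \ ↑F, p ∣ n := by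
  obtain ⟨⟨hn0, -⟩, hnF⟩ := by simpa only [sifted, Finset.mem_filter, Finset.mem_Ioc] using hn
  obtain ⟨p, hp, hpn, hpQ⟩ : ∃ p, p.Prime ∧ p ∣ n ∧ p ∉ Q := by simpa [genBy, hn0] using hnQ
  exact ⟨p, ⟨⟨hp, hpQ⟩, fun hpF => hnF p hpF hpn⟩, hpn⟩

lemma card_sifted_le_ncard_add {Q : Set ℕ} {F : Finset ℕ} {ε : ℝ}
    (htail : ∀ T : Finset ℕ, ↑T ⊆ primesNotIn Q \ ↑F → ∑ p ∈ T, (p : ℝ)⁻¹ ≤ ε) (N : ℕ) :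
    ((sifted F N).card : ℝ) ≤ (genBy Q ∩ Iic N).ncard + N * ε := by
  classical
  set T := {p ∈ Finset.Iic N | p ∈ primesNotIn Q \ ↑F}
  have hcover : sifted F N ⊆
      {n ∈ sifted F N | n ∈ genBy Q} ∪ T.biUnion fun p => {n ∈ Finset.Ioc 0 N | p ∣ n} := by
    intro n hn
    by_cases hnQ : n ∈ genBy Q
    · exact Finset.mem_union_left _ (Finset.mem_filter.2 ⟨hn, hnQ⟩)
    obtain ⟨p, hpQF, hpn⟩ := exists_prime_dvd_of_mem_sifted hn hnQ
    have hnN := Finset.mem_Ioc.1 (Finset.mem_filter.1 hn).1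
    refine Finset.mem_union_right _ (Finset.mem_biUnion.2 ⟨p, ?_, ?_⟩)
    · exact Finset.mem_filter.2 ⟨Finset.mem_Iic.2 ((Nat.le_of_dvd hnN.1 hpn).trans hnN.2), hpQF⟩
    · exact Finset.mem_filter.2 ⟨Finset.mem_Ioc.2 hnN, hpn⟩
  have hK : ({n ∈ sifted F N | n ∈ genBy Q}.card : ℝ) ≤ (genBy Q ∩ Iic N).ncard := by
    rw [← Set.ncard_coe_finset]
    refine Nat.cast_le.2 (Set.ncard_le_ncard ?_ ((Set.finite_Iic N).inter_of_right _))
    intro n hn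
    obtain ⟨hn, hnQ⟩ := Finset.mem_filter.1 hn
    exact ⟨hnQ, (Finset.mem_Ioc.1 (Finset.mem_filter.1 hn).1).2⟩
  have hmult : ((T.biUnion fun p => {n ∈ Finset.Ioc 0 N | p ∣ n}).card : ℝ) ≤ N * ε := by
    calc ((T.biUnion fun p => {n ∈ Finset.Ioc 0 N | p ∣ n}).card : ℝ)
        ≤ ∑ p ∈ T, ((N / p : ℕ) : ℝ) := by
          simp only [← Nat.Ioc_filter_dvd_card_eq_div, ← Nat.cast_sum]
          exact Nat.cast_le.2 Finset.card_biUnion_le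
      _ ≤ ∑ p ∈ T, N * (p : ℝ)⁻¹ := Finset.sum_le_sum fun p _ => Nat.cast_div_le
      _ ≤ N * ε := by
          rw [← Finset.mul_sum]
          exact mul_le_mul_of_nonneg_left (htail T fun p hp => (Finset.mem_filter.1 hp).2)
            (Nat.cast_nonneg N)
  calc ((sifted F N).card : ℝ)
      ≤ ({n ∈ sifted F N | n ∈ genBy Q}.card : ℝ)
        + (T.biUnion fun p => {n ∈ Finset.Ioc 0 N | p ∣ n}).card := by
        exact_mod_cast (Finset.card_le_card hcover).trans (Finset.card_union_le _ _)
    _ ≤ (genBy Q ∩ Iic N).ncard + N * ε := add_le_add hK hmult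

lemma countK_genBy_le {Q : Set ℕ} {F : Finset ℕ} (hF : ↑F ⊆ primesNotIn Q) {x : ℝ}
    (hx : 0 ≤ x) : countK (genBy Q) x ≤ x * ∏ p ∈ F, (1 - (p : ℝ)⁻¹) + 2 ^ F.card := by
  have hsub : ((genBy Q ∩ Iic ⌊x⌋₊).ncard : ℝ) ≤ (sifted F ⌊x⌋₊).card := by
    rw [← Set.ncard_coe_finset]
    exact Nat.cast_le.2 (Set.ncard_le_ncard (genBy_inter_Iic_subset_sifted hF _))
  have hsieve := (abs_le.1 (abs_card_sifted_sub_le (fun p hp => (hF hp).1) ⌊x⌋₊)).2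
  have hfloor := mul_le_mul_of_nonneg_right (Nat.floor_le hx) (prod_one_sub_natCast_inv_nonneg F)
  rw [countK_eq_ncard_inter_Iic _ hx]
  linarith

lemma le_countK_genBy {Q : Set ℕ} {F : Finset ℕ} (hF : ↑F ⊆ primesNotIn Q) {ε : ℝ}
    (htail : ∀ T : Finset ℕ, ↑T ⊆ primesNotIn Q \ ↑F → ∑ p ∈ T, (p : ℝ)⁻¹ ≤ ε) {x : ℝ}
    (hx : 0 ≤ x) : x * ∏ p ∈ F, (1 - (p : ℝ)⁻¹) - x * ε - 2 ^ F.card ≤ countK (genBy Q) x := by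
  have hε : 0 ≤ ε := by simpa using htail ∅ (by simp)
  have hsieve := (abs_le.1 (abs_card_sifted_sub_le (fun p hp => (hF hp).1) ⌊x⌋₊)).1
  have hcount := card_sifted_le_ncard_add htail ⌊x⌋₊
  have hd0 := prod_one_sub_natCast_inv_nonneg F
  have hd1 := prod_one_sub_natCast_inv_le_one F
  have hfloor : x * ∏ p ∈ F, (1 - (p : ℝ)⁻¹) ≤ ⌊x⌋₊ * ∏ p ∈ F, (1 - (p : ℝ)⁻¹) + 1 := by
    nlinarith [Nat.lt_floor_add_one x]
  have hεx := mul_le_mul_of_nonneg_right (Nat.floor_le hx) hε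
  rw [countK_eq_ncard_inter_Iic _ hx]
  linarith

lemma tendsto_const_add_div_atTop (c r : ℝ) :
    Tendsto (fun x : ℝ => c + r / x) atTop (𝓝 c) := by
  have h : Tendsto (fun x : ℝ => r / x) atTop (𝓝 0) := tendsto_const_nhds.div_atTop tendsto_id
  simpa using tendsto_const_nhds.add h

lemma eventually_countK_genBy_div_lt {Q : Set ℕ} {b : ℝ}
    (hb : (siftedDensity (primesNotIn Q)).toReal < b) :
    ∀ᶠ x in atTop, countK (genBy Q) x / x < b := by
  obtain ⟨F, hF, hFb⟩ :=
    exists_prod_lt_of_toReal_siftedDensity_lt (fun h => Nat.not_prime_zero h.1) hb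
  filter_upwards [(tendsto_const_add_div_atTop _ (2 ^ F.card)).eventually (gt_mem_nhds hFb),
    eventually_gt_atTop 0] with x hx hx0
  rw [div_lt_iff₀ hx0]
  calc countK (genBy Q) x ≤ x * ∏ p ∈ F, (1 - (p : ℝ)⁻¹) + 2 ^ F.card := countK_genBy_le hF hx0.le
    _ = (∏ p ∈ F, (1 - (p : ℝ)⁻¹) + 2 ^ F.card / x) * x := by field_simp
    _ < b * x := mul_lt_mul_of_pos_right hx hx0

lemma eventually_lt_countK_genBy_div {Q : Set ℕ} {b : ℝ}
    (hb : b < (siftedDensity (primesNotIn Q)).toReal) :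
    ∀ᶠ x in atTop, b < countK (genBy Q) x / x := by
  rcases eq_or_ne (siftedDensity (primesNotIn Q)) 0 with hD | hD
  · rw [hD, ENNReal.toReal_zero] at hb
    filter_upwards [eventually_gt_atTop 0] with x hx
    exact hb.trans_le (div_nonneg (Nat.cast_nonneg _) hx.le)
  have hP : ∀ p ∈ primesNotIn Q, p.Prime := fun p hp => hp.1
  have hZ : ∑' n : genBy (primesNotIn Q), (n : ℝ≥0∞)⁻¹ ≠ ⊤ := by
    rwa [← ENNReal.inv_ne_zero, inv_tsum_inv_genBy hP]
  obtain ⟨ε, hε, hbε⟩ : ∃ ε > 0, b + ε < (siftedDensity (primesNotIn Q)).toReal :=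
    ⟨_, half_pos (sub_pos.2 hb), by linarith⟩
  obtain ⟨F, hF, htail⟩ := exists_sum_inv_le_of_tsum_inv_genBy_ne_top hP hZ hε
  have hDF := toReal_siftedDensity_le (fun h => Nat.not_prime_zero h.1) hF
  have hbF : b < ∏ p ∈ F, (1 - (p : ℝ)⁻¹) - ε := by linarith
  filter_upwards [(tendsto_const_add_div_atTop _ (-2 ^ F.card)).eventually (lt_mem_nhds hbF),
    eventually_gt_atTop 0] with x hx hx0
  rw [lt_div_iff₀ hx0]
  calc b * x < (∏ p ∈ F, (1 - (p : ℝ)⁻¹) - ε + -2 ^ F.card / x) * x :=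
        mul_lt_mul_of_pos_right hx hx0
    _ = x * ∏ p ∈ F, (1 - (p : ℝ)⁻¹) - x * ε - 2 ^ F.card := by field_simp; ring
    _ ≤ countK (genBy Q) x := le_countK_genBy hF htail hx0.le

theorem tendsto_countK_genBy_div (Q : Set ℕ) :
    Tendsto (fun x => countK (genBy Q) x / x) atTop (𝓝 (siftedDensity (primesNotIn Q)).toReal) :=
  tendsto_order.2 ⟨fun _ => eventually_lt_countK_genBy_div, fun _ => eventually_countK_genBy_div_lt⟩

lemma tendsto_tsum_rpow_neg_nhdsGT_one {S : Set ℕ} (hS : 0 ∉ S) :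
    Tendsto (fun σ : ℝ => ∑' n : S, (n : ℝ≥0∞) ^ (-σ)) (𝓝[>] 1) (𝓝 (∑' n : S, (n : ℝ≥0∞)⁻¹)) := by
  have hn : ∀ n : S, (n : ℕ) ≠ 0 := fun n h => hS (h ▸ n.2)
  have hlsc : LowerSemicontinuous fun σ : ℝ => ∑' n : S, (n : ℝ≥0∞) ^ (-σ) := by
    refine lowerSemicontinuous_tsum fun n => Continuous.lowerSemicontinuous ?_
    simp_rw [← ENNReal.ofReal_natCast,
      ENNReal.ofReal_rpow_of_pos (Nat.cast_pos.2 (Nat.pos_of_ne_zero (hn n)))]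
    exact ENNReal.continuous_ofReal.comp
      (continuous_const.rpow continuous_neg fun _ => Or.inl (Nat.cast_ne_zero.2 (hn n)))
  refine tendsto_order.2 ⟨fun b hb => ?_, fun b hb => ?_⟩
  · exact nhdsWithin_le_nhds (hlsc 1 b (by simpa only [ENNReal.rpow_neg_one] using hb))
  · filter_upwards [self_mem_nhdsWithin] with σ hσ
    refine lt_of_le_of_lt (ENNReal.tsum_le_tsum fun n => ?_) hb
    rw [← ENNReal.rpow_neg_one]
    exact ENNReal.rpow_le_rpow_of_exponent_le (by exact_mod_cast Nat.one_le_iff_ne_zero.2 (hn n))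
      (by linarith [mem_Ioi.1 hσ])

lemma tsum_natCast_rpow_eq_toReal {S : Set ℕ} (hS : 0 ∉ S) (s : ℝ) :
    ∑' n : S, (n : ℝ) ^ s = (∑' n : S, (n : ℝ≥0∞) ^ s).toReal := by
  have hn : ∀ n : S, (n : ℝ≥0∞) ≠ 0 := fun n h => hS (Nat.cast_eq_zero.1 h ▸ n.2)
  rw [ENNReal.tsum_toReal_eq fun n => by simp [ENNReal.rpow_eq_top_iff, hn n]]
  simp [← ENNReal.toReal_rpow]

theorem tendsto_inv_tsum_genBy_rpow_neg {P : Set ℕ} (hP : ∀ p ∈ P, p.Prime) :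
    Tendsto (fun σ : ℝ => (∑' n : genBy P, (n : ℝ) ^ (-σ))⁻¹) (𝓝[>] 1)
      (𝓝 (siftedDensity P).toReal) := by
  have h0 : 0 ∉ genBy P := fun h => lt_irrefl 0 h.1
  simp_rw [tsum_natCast_rpow_eq_toReal h0, ← ENNReal.toReal_inv]
  rw [← inv_tsum_inv_genBy hP]
  refine (ENNReal.tendsto_toReal ?_).comp (tendsto_tsum_rpow_neg_nhdsGT_one h0).inv
  exact inv_tsum_inv_genBy hP ▸ siftedDensity_ne_top P

theorem statement11_general (Q : Set ℕ) :
    ∃ A : ℝ,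
      Tendsto (fun x : ℝ => countK (genBy Q) x / x) atTop (𝓝 A) ∧
        Tendsto (fun σ : ℝ =>
            (∑' n : genBy (primesNotIn Q), (((n : ℕ) : ℝ)) ^ (-σ))⁻¹)
          (𝓝[>] (1:ℝ)) (𝓝 A) :=
  ⟨_, tendsto_countK_genBy_div Q, tendsto_inv_tsum_genBy_rpow_neg fun _ hp => hp.1⟩

/-- Let `Q` be a set of primes, `K` the multiplicative semigroup generated
by `Q` and `J` the semigroup generated by the primes not in `Q`. Then `lim_{x→∞} π_K(x)/x`
exists and equals `lim_{σ→1⁺} 1/ζ_J(σ)` (the latter limit being `0` when `ζ_J(σ) → ∞`). -/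
theorem statement11 (Q : Set ℕ) (hQ : ∀ p ∈ Q, p.Prime) :
    ∃ A : ℝ,
      Tendsto (fun x : ℝ => countK (genBy Q) x / x) atTop (𝓝 A) ∧
        Tendsto (fun σ : ℝ =>
            (∑' n : genBy (primesNotIn Q), (((n : ℕ) : ℝ)) ^ (-σ))⁻¹)
          (𝓝[>] (1:ℝ)) (𝓝 A) :=
  statement11_general Q

end
end

section
/- Let Q be a set of prime numbers, let P be the set of primes not in Q, and let J be the multiplicative semigroup generated by P. Assume Σ_{p∈P} 1/p < ∞. Let q > 1 and let q' satisfy 1/q + 1/q' = 1. If Σ_{p∈P} (log p)^{1/q'}/p = ∞, then for every r > q the function t ↦ (ζ_J(1+it) − ζ_J(1))/t is not in L^r_loc, i.e. there is a bounded interval I ⊂ ℝ on which it fails to be in L^r(I). -/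
open MeasureTheory Set Filter Topology ComplexConjugate

noncomputable section

/-!
Write `J` for the semigroup generated by `P`. The Euler product bounds `Σ_{n∈J} 1/n` by
`exp (2 Σ_{p∈P} 1/p)`, and `Re (ζ_J(1) − ζ_J(1+it)) = Σ_{n∈J} (1 − cos (t log n))/n`.
Group the primes of `P` into the blocks `2^(2^k) ≤ p < 2^(2^(k+1))` and let `S_k` be the sum of
`1/p` over block `k`. For `t · 2^k log 2 ∈ [π/2, 3π/4)` every prime of block `k` has
`cos (t log p) ≤ 0`, so `|ζ_J(1+it) − ζ_J(1)| ≥ S_k` on a window of length `≍ 2^(-k)` around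
`t ≍ 2^(-k)`. If `(ζ_J(1+it) − ζ_J(1))/t` were in `L^r` near `0`, integrating over this window
would give `S_k ≲ 2^(-k(1 − 1/r))`. As `1/q' = 1 − 1/q < 1 − 1/r`, the series
`Σ_k 2^(k/q') S_k`, which bounds `Σ_{p∈P} (log p)^(1/q')/p` up to a constant factor, would
then converge.
-/

open Real

lemma inv_one_sub_le_exp_two_mul {x : ℝ} (hx0 : 0 ≤ x) (hx : x ≤ 1 / 2) :
    (1 - x)⁻¹ ≤ exp (2 * x) :=
  calc (1 - x)⁻¹ ≤ 1 + 2 * x := by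
        rw [inv_le_iff_one_le_mul₀ (by linarith)]
        nlinarith
    _ ≤ exp (2 * x) := by linarith [add_one_le_exp (2 * x)]

lemma summable_one_div_genBy {P : Set ℕ} (hP : Summable fun p : P => (1 : ℝ) / p) :
    Summable fun n : genBy P => (1 : ℝ) / n := by
  classical
  let f : ℕ →* ℝ := invMonoidHom.comp (Nat.castRingHom ℝ)
  have hf (n : ℕ) : f n = 1 / n := by simp [f]
  have hp2 {p : ℕ} (hp : p.Prime) : 1 / (p : ℝ) ≤ 1 / 2 := by
    gcongr
    exact_mod_cast hp.two_le
  refine summable_of_sum_le (c := exp (2 * ∑' p : P, (1 : ℝ) / p)) (fun _ => by positivity)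
    fun u => ?_
  set s : Finset ℕ := u.biUnion fun n => (n : ℕ).primeFactors
  have hsP : ∀ p ∈ s, p ∈ P := by
    simp only [s, Finset.mem_biUnion, Nat.mem_primeFactors]
    rintro p ⟨n, -, hp, hpn, -⟩
    exact n.2.2 p hp hpn
  have hu : ∀ n ∈ u, (n : ℕ) ∈ Nat.factoredNumbers s := fun n hn =>
    Nat.mem_factoredNumbers.mpr ⟨n.2.1.ne', fun p hp =>
      Finset.mem_biUnion.mpr ⟨n, hn, Nat.mem_primeFactors_iff_mem_primeFactorsList.mpr hp⟩⟩
  have hinj : Function.Injective fun n : u => (⟨n.1, hu n.1 n.2⟩ : Nat.factoredNumbers s) :=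
    fun a b h => Subtype.ext (Subtype.ext (congrArg Subtype.val h :))
  obtain ⟨hsum, hprod⟩ :=
    EulerProduct.summable_and_hasSum_factoredNumbers_prod_filter_prime_geometric (f := f)
      (fun hp => by rw [hf, norm_of_nonneg (by positivity)]; linarith [hp2 hp]) s
  calc ∑ n ∈ u, (1 : ℝ) / n = ∑' n : u, f (n : genBy P) := by
        rw [Finset.tsum_subtype u fun n : genBy P => f n]
        simp only [hf]
    _ ≤ ∑' m : Nat.factoredNumbers s, f m :=
        tsum_comp_le_tsum_of_inj hsum.of_norm (fun m => by rw [hf]; positivity) hinj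
    _ = ∏ p ∈ s with p.Prime, (1 - 1 / (p : ℝ))⁻¹ := by
        rw [hprod.tsum_eq]
        simp only [hf]
    _ ≤ ∏ p ∈ s with p.Prime, exp (2 * (1 / p)) := by
        refine Finset.prod_le_prod (fun p hp => ?_) fun p hp => ?_ <;>
          have hp' := hp2 (Finset.mem_filter.mp hp).2
        · exact inv_nonneg.mpr (by linarith)
        · exact inv_one_sub_le_exp_two_mul (by positivity) hp'
    _ = exp (2 * ∑ p ∈ s with p.Prime, (1 : ℝ) / p) := by rw [← exp_sum, Finset.mul_sum]
    _ ≤ exp (2 * ∑' p : P, (1 : ℝ) / p) := by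
        gcongr
        calc ∑ p ∈ s with p.Prime, (1 : ℝ) / p ≤ ∑ p ∈ s, (1 : ℝ) / p :=
              Finset.sum_le_sum_of_subset_of_nonneg (Finset.filter_subset _ _)
                fun _ _ _ => by positivity
          _ = ∑ p ∈ s.subtype (· ∈ P), (1 : ℝ) / p :=
              (Finset.sum_subtype_of_mem (fun p : ℕ => (1 : ℝ) / p) hsP).symm
          _ ≤ ∑' p : P, (1 : ℝ) / p := hP.sum_le_tsum _ fun _ _ => by positivity

lemma re_natCast_cpow_neg_one_add {n : ℕ} (hn : 0 < n) (t : ℝ) :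
    ((n : ℂ) ^ (-(1 + Complex.I * t))).re = cos (t * log n) / n := by
  rw [Complex.cpow_def_of_ne_zero (Nat.cast_ne_zero.mpr hn.ne'), ← Complex.natCast_log,
    Complex.exp_re]
  simp only [Complex.mul_re, Complex.mul_im, Complex.ofReal_re, Complex.ofReal_im]
  simp [exp_neg, exp_log (Nat.cast_pos.mpr hn), mul_comm, div_eq_inv_mul]

lemma norm_natCast_cpow_neg_one_add {n : ℕ} (hn : 0 < n) (t : ℝ) :
    ‖(n : ℂ) ^ (-(1 + Complex.I * t))‖ = 1 / n := by
  simp [Complex.norm_natCast_cpow_of_pos hn, rpow_neg_one]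

lemma summable_natCast_cpow_neg_one_add {J : Set ℕ} (hJ : ∀ n ∈ J, 0 < n)
    (hJs : Summable fun n : J => (1 : ℝ) / n) (t : ℝ) :
    Summable fun n : J => (n : ℂ) ^ (-(1 + Complex.I * t)) :=
  .of_norm <| hJs.congr fun n => (norm_natCast_cpow_neg_one_add (hJ n n.2) t).symm

lemma tsum_one_sub_cos_div_le_norm_zetaLine_sub {J : Set ℕ} (hJ : ∀ n ∈ J, 0 < n)
    (hJs : Summable fun n : J => (1 : ℝ) / n) (t : ℝ) :
    ∑' n : J, (1 - cos (t * log n)) / n ≤ ‖zetaLine J t - zetaLine J 0‖ := by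
  have ht := summable_natCast_cpow_neg_one_add hJ hJs t
  have h0 := summable_natCast_cpow_neg_one_add hJ hJs 0
  have hre : (zetaLine J t - zetaLine J 0).re = -∑' n : J, (1 - cos (t * log n)) / n := by
    rw [zetaLine, zetaLine, ← ht.tsum_sub h0, Complex.re_tsum (ht.sub h0), ← tsum_neg]
    refine tsum_congr fun n => ?_
    rw [Complex.sub_re, re_natCast_cpow_neg_one_add (hJ n n.2),
      re_natCast_cpow_neg_one_add (hJ n n.2)]
    simp only [zero_mul, cos_zero]
    ring
  calc ∑' n : J, (1 - cos (t * log n)) / n = -(zetaLine J t - zetaLine J 0).re := by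
        rw [hre, neg_neg]
    _ ≤ ‖zetaLine J t - zetaLine J 0‖ := (neg_le_abs _).trans (Complex.abs_re_le_norm _)

def logLogBlock (k : ℕ) : Set ℕ := {n | Nat.log 2 (Nat.log 2 n) = k}

section logLogBlock

variable {n k : ℕ}

lemma lt_of_mem_logLogBlock (h : n ∈ logLogBlock k) : n < 2 ^ 2 ^ (k + 1) := by
  have hlog : Nat.log 2 n < 2 ^ (k + 1) := h ▸ Nat.lt_pow_succ_log_self one_lt_two _
  exact (Nat.lt_pow_succ_log_self one_lt_two n).trans_le (Nat.pow_le_pow_right two_pos hlog)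

lemma le_of_mem_logLogBlock (hn : 2 ≤ n) (h : n ∈ logLogBlock k) : 2 ^ 2 ^ k ≤ n := by
  have hlog : 2 ^ k ≤ Nat.log 2 n :=
    h ▸ Nat.pow_log_le_self 2 (Nat.log_pos one_lt_two hn).ne'
  exact (Nat.pow_le_pow_right two_pos hlog).trans (Nat.pow_log_le_self 2 (by omega))

lemma finite_logLogBlock (k : ℕ) : (logLogBlock k).Finite :=
  (Set.finite_Iio (2 ^ 2 ^ (k + 1))).subset fun _ => lt_of_mem_logLogBlock

lemma log_lt_of_mem_logLogBlock (h : n ∈ logLogBlock k) : log n < 2 ^ (k + 1) * log 2 := by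
  rcases n.eq_zero_or_pos with rfl | hn
  · simp [log_pos one_lt_two]
  calc log n < log ((2 : ℕ) ^ 2 ^ (k + 1) : ℕ) :=
        log_lt_log (by exact_mod_cast hn) (by exact_mod_cast lt_of_mem_logLogBlock h)
    _ = 2 ^ (k + 1) * log 2 := by push_cast; rw [log_pow]; push_cast; ring

lemma le_log_of_mem_logLogBlock (hn : 2 ≤ n) (h : n ∈ logLogBlock k) : 2 ^ k * log 2 ≤ log n := by
  calc 2 ^ k * log 2 = log ((2 : ℕ) ^ 2 ^ k : ℕ) := by push_cast; rw [log_pow]; push_cast; ring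
    _ ≤ log n := log_le_log (by positivity) (by exact_mod_cast le_of_mem_logLogBlock hn h)

end logLogBlock

lemma cos_mul_nonpos_of_mem_Ico {L t x : ℝ} (hL : 0 < L)
    (ht : t ∈ Ico (π / (2 * L)) (3 * π / (4 * L))) (hx : x ∈ Ico L (2 * L)) :
    cos (t * x) ≤ 0 := by
  have ht0 : 0 ≤ t := (by positivity : (0 : ℝ) ≤ π / (2 * L)).trans ht.1
  apply cos_nonpos_of_pi_div_two_le_of_le
  · calc π / 2 = π / (2 * L) * L := by field_simp
      _ ≤ t * x := mul_le_mul ht.1 hx.1 hL.le ht0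
  · calc t * x ≤ 3 * π / (4 * L) * (2 * L) :=
          mul_le_mul ht.2.le hx.2.le (hL.le.trans hx.1) (by positivity)
      _ = π + π / 2 := by field_simp; ring

lemma tsum_logLogBlock_le_norm_zetaLine_sub {P : Set ℕ} (hP : ∀ p ∈ P, p.Prime)
    (hJ : Summable fun n : genBy P => (1 : ℝ) / n) (k : ℕ) {t : ℝ}
    (ht : t ∈ Ico (π / (2 * log 2) / 2 ^ k) (3 * π / (4 * log 2) / 2 ^ k)) :
    ∑' n : logLogBlock k, P.indicator (fun n => (1 : ℝ) / n) n
      ≤ ‖zetaLine (genBy P) t - zetaLine (genBy P) 0‖ := by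
  have hterm : ∀ n : ℕ, 0 ≤ (1 - cos (t * log n)) / n := fun n => by
    have := cos_le_one (t * log n)
    exact div_nonneg (by linarith) n.cast_nonneg
  have hJ' : Summable ((genBy P).indicator fun n => (1 - cos (t * log n)) / n) := by
    refine .of_nonneg_of_le (indicator_nonneg fun n _ => hterm n) (fun n => ?_)
      ((summable_subtype_iff_indicator (f := fun n : ℕ => (1 : ℝ) / n)).mp hJ |>.mul_left 2)
    by_cases hn : n ∈ genBy P
    · simp only [indicator_of_mem hn, mul_one_div]
      gcongr
      linarith [neg_one_le_cos (t * log n)]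
    · simp [indicator_of_notMem hn]
  have hwin : ∀ n, (logLogBlock k).indicator (P.indicator fun n => (1 : ℝ) / n) n
      ≤ (genBy P).indicator (fun n => (1 - cos (t * log n)) / n) n := fun n => by
    rw [indicator_indicator]
    by_cases hn : n ∈ logLogBlock k ∩ P
    · rw [indicator_of_mem hn]
      obtain ⟨hnk, hnP⟩ := hn
      have hp := hP n hnP
      have hnJ : n ∈ genBy P :=
        ⟨hp.pos, fun p hp' hpn => (Nat.prime_dvd_prime_iff_eq hp' hp).mp hpn ▸ hnP⟩
      have hL : (0 : ℝ) < 2 ^ k * log 2 := by positivity [log_pos one_lt_two]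
      have hcos : cos (t * log n) ≤ 0 := by
        refine cos_mul_nonpos_of_mem_Ico hL ?_ ⟨le_log_of_mem_logLogBlock hp.two_le hnk, ?_⟩
        · convert ht using 2 <;> ring
        · have := log_lt_of_mem_logLogBlock hnk
          rw [pow_succ] at this
          linarith
      rw [indicator_of_mem hnJ]
      gcongr
      linarith
    · rw [indicator_of_notMem hn]
      exact indicator_nonneg (fun n _ => hterm n) n
  calc ∑' n : logLogBlock k, P.indicator (fun n => (1 : ℝ) / n) n
      = ∑' n, (logLogBlock k).indicator (P.indicator fun n => (1 : ℝ) / n) n := tsum_subtype _ _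
    _ ≤ ∑' n, (genBy P).indicator (fun n => (1 - cos (t * log n)) / n) n :=
        Summable.tsum_le_tsum hwin
          (summable_subtype_iff_indicator.mp
            ((finite_logLogBlock k).summable (P.indicator fun n => (1 : ℝ) / n))) hJ'
    _ = ∑' n : genBy P, (1 - cos (t * log n)) / n := (tsum_subtype _ _).symm
    _ ≤ ‖zetaLine (genBy P) t - zetaLine (genBy P) 0‖ :=
        tsum_one_sub_cos_div_le_norm_zetaLine_sub (fun n hn => hn.1) hJ t

lemma summable_log_rpow_div_of_summable_logLogBlock {A : Set ℕ} {α : ℝ} (hα : 0 ≤ α)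
    (h : Summable fun k : ℕ =>
      ((2 : ℝ) ^ k) ^ α * ∑' n : logLogBlock k, A.indicator (fun n => (1 : ℝ) / n) n) :
    Summable fun n : A => log n ^ α / n := by
  have hg : ∀ n : ℕ, 0 ≤ log n ^ α / n := fun n => by
    have := log_natCast_nonneg n
    positivity
  have hf : 0 ≤ A.indicator fun n : ℕ => log n ^ α / n := fun n =>
    indicator_nonneg (fun n _ => hg n) n
  suffices Summable (A.indicator fun n : ℕ => log n ^ α / n) from
    summable_subtype_iff_indicator.mpr this
  refine (summable_partition hf (s := logLogBlock) fun n => ⟨_, rfl, fun _ h => h.symm⟩).mpr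
    ⟨fun k => (finite_logLogBlock k).summable (A.indicator fun n : ℕ => log n ^ α / n), ?_⟩
  refine .of_nonneg_of_le (fun k => tsum_nonneg fun n => hf n)
    (fun k => ?_) (h.mul_left ((2 * log 2) ^ α))
  have : Finite (logLogBlock k) := (finite_logLogBlock k).to_subtype
  have hpow : (2 ^ (k + 1) * log 2) ^ α = ((2 : ℝ) ^ k) ^ α * (2 * log 2) ^ α := by
    rw [← mul_rpow (by positivity) (by positivity [log_pos one_lt_two])]
    congr 1
    ring
  calc ∑' n : logLogBlock k, A.indicator (fun n : ℕ => log n ^ α / n) n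
      ≤ ∑' n : logLogBlock k, (2 ^ (k + 1) * log 2) ^ α * A.indicator (fun n => (1 : ℝ) / n) n := by
        refine Summable.tsum_le_tsum (fun n => ?_) .of_finite .of_finite
        by_cases hA : (n : ℕ) ∈ A
        · simp only [indicator_of_mem hA, mul_one_div]
          gcongr
          exact (log_lt_of_mem_logLogBlock n.2).le
        · simp [indicator_of_notMem hA]
    _ = (2 * log 2) ^ α * (((2 : ℝ) ^ k) ^ α *
          ∑' n : logLogBlock k, A.indicator (fun n => (1 : ℝ) / n) n) := by
        rw [tsum_mul_left, hpow]
        ring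

lemma summable_two_pow_rpow_mul_of_bdd {S : ℕ → ℝ} {α β C : ℝ} (hαβ : α < β)
    (hS : ∀ k, 0 ≤ S k) (hC : ∀ k, S k * ((2 : ℝ) ^ k) ^ β ≤ C) :
    Summable fun k : ℕ => ((2 : ℝ) ^ k) ^ α * S k := by
  have hρ : (2 : ℝ) ^ (α - β) < 1 := rpow_lt_one_of_one_lt_of_neg one_lt_two (by linarith)
  refine .of_nonneg_of_le (fun k => by positivity [hS k]) (fun k => ?_)
    ((summable_geometric_of_lt_one (by positivity) hρ).mul_right C)
  calc ((2 : ℝ) ^ k) ^ α * S k = ((2 : ℝ) ^ k) ^ (α - β) * (S k * ((2 : ℝ) ^ k) ^ β) := by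
        rw [rpow_sub (by positivity)]
        field_simp
    _ ≤ ((2 : ℝ) ^ (α - β)) ^ k * C := by
        rw [← rpow_pow_comm zero_le_two]
        exact mul_le_mul_of_nonneg_left (hC k) (by positivity)

lemma rpow_mul_measureReal_le_setIntegral_norm_rpow {α E : Type*} [MeasurableSpace α]
    [NormedAddCommGroup E] {μ : Measure α} {F : α → E} {U W : Set α} {r c : ℝ} (hr : 0 < r)
    (hF : MemLp F (ENNReal.ofReal r) (μ.restrict U)) (hW : MeasurableSet W) (hWU : W ⊆ U)
    (hWμ : μ W ≠ ⊤) (hc : 0 ≤ c) (hcF : ∀ t ∈ W, c ≤ ‖F t‖) :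
    c ^ r * μ.real W ≤ ∫ t in U, ‖F t‖ ^ r ∂μ := by
  have hint : IntegrableOn (fun t => ‖F t‖ ^ r) U μ := by
    have := hF.integrable_norm_rpow (by simpa using hr) ENNReal.ofReal_ne_top
    rwa [ENNReal.toReal_ofReal hr.le] at this
  calc c ^ r * μ.real W = μ.real W • c ^ r := by rw [smul_eq_mul, mul_comm]
    _ ≤ ∫ t in W, ‖F t‖ ^ r ∂μ := setIntegral_ge_of_const_le hW hWμ
        (fun t ht => rpow_le_rpow hc (hcF t ht) hr.le) (hint.mono_set hWU)
    _ ≤ ∫ t in U, ‖F t‖ ^ r ∂μ := setIntegral_mono_set hint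
        (ae_of_all _ fun t => by positivity) hWU.eventuallyLE

lemma exists_mul_rpow_le_of_memLp_Ioo {E : Type*} [NormedAddCommGroup E] {F : ℝ → E}
    {r b u v : ℝ} (hr : 0 < r) (hu : 0 < u) (huv : u < v) (hvb : v ≤ b)
    (hF : MemLp F (ENNReal.ofReal r) (volume.restrict (Ioo 0 b))) :
    ∃ C, ∀ L S : ℝ, 1 ≤ L → 0 ≤ S → (∀ t ∈ Ico (u / L) (v / L), S ≤ t * ‖F t‖) →
      S * L ^ (1 - 1 / r) ≤ C := by
  set M := ∫ t in Ioo 0 b, ‖F t‖ ^ r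
  refine ⟨(M * v ^ r / (v - u)) ^ (1 / r), fun L S hL hS hwin => ?_⟩
  have hL0 : 0 < L := by linarith
  have hv : 0 < v := hu.trans huv
  have hWU : Ico (u / L) (v / L) ⊆ Ioo 0 b := fun t ht =>
    ⟨(div_pos hu hL0).trans_le ht.1, ht.2.trans_le ((div_le_self hv.le hL).trans hvb)⟩
  have hvol : volume.real (Ico (u / L) (v / L)) = (v - u) / L := by
    rw [measureReal_def, Real.volume_Ico, ENNReal.toReal_ofReal (sub_nonneg.mpr (by gcongr))]
    ring
  have key := rpow_mul_measureReal_le_setIntegral_norm_rpow hr hF measurableSet_Ico hWU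
    (by simp [Real.volume_Ico]) (c := S * L / v) (by positivity) fun t ht => by
      have ht0 : 0 < t := (div_pos hu hL0).trans_le ht.1
      calc S * L / v = S / (v / L) := by field_simp
        _ ≤ S / t := div_le_div_of_nonneg_left hS ht0 ht.2.le
        _ ≤ ‖F t‖ := (div_le_iff₀ ht0).mpr (by linarith [hwin t ht])
  rw [hvol] at key
  have hpow : (S * L ^ (1 - 1 / r)) ^ r = (S * L / v) ^ r * ((v - u) / L) * (v ^ r / (v - u)) := by
    have hLr : L ^ ((1 - 1 / r) * r) = L ^ r / L := by
      rw [show (1 - 1 / r) * r = r - 1 by field_simp, rpow_sub_one hL0.ne']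
    have hvu : v - u ≠ 0 := by linarith
    rw [mul_rpow hS (by positivity), ← rpow_mul hL0.le, hLr, div_rpow (by positivity) hv.le,
      mul_rpow hS hL0.le]
    field_simp
  calc S * L ^ (1 - 1 / r) = ((S * L ^ (1 - 1 / r)) ^ r) ^ (1 / r) := by
        rw [← rpow_mul (by positivity), mul_one_div_cancel hr.ne', rpow_one]
    _ ≤ (M * v ^ r / (v - u)) ^ (1 / r) := by
        gcongr
        rw [hpow, mul_div_assoc M]
        exact mul_le_mul_of_nonneg_right key (div_nonneg (by positivity) (by linarith))

theorem statement15_general (Q : Set ℕ)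
    (hP : Summable fun p : primesNotIn Q => (1 : ℝ) / ((p : ℕ) : ℝ))
    (q q' : ℝ) (hq : 1 < q) (hq' : 1 / q + 1 / q' = 1)
    (hsum : ¬ Summable fun p : primesNotIn Q =>
      Real.log ((p : ℕ) : ℝ) ^ (1 / q') / ((p : ℕ) : ℝ)) :
    ∀ r : ℝ, q < r →
      ∃ a b : ℝ, ¬ MemLp
        (fun t : ℝ =>
          (zetaLine (genBy (primesNotIn Q)) t - zetaLine (genBy (primesNotIn Q)) 0) / (t : ℂ))
        (ENNReal.ofReal r) (volume.restrict (Ioo a b)) := by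
  intro r hr
  have hlog2 : 0 < log 2 := log_pos one_lt_two
  refine ⟨0, 3 * π / (4 * log 2), fun hF => hsum ?_⟩
  obtain ⟨C, hC⟩ := exists_mul_rpow_le_of_memLp_Ioo (u := π / (2 * log 2)) (by linarith)
    (by positivity) (by rw [div_lt_div_iff₀ (by positivity) (by positivity)]; nlinarith [pi_pos])
    le_rfl hF
  have hq1 : 1 / q < 1 := (div_lt_one (by linarith)).mpr hq
  have hα : 1 / q' < 1 - 1 / r := by
    have := one_div_lt_one_div_of_lt (by linarith) hr
    linarith
  have hS : ∀ k, 0 ≤ ∑' n : logLogBlock k, (primesNotIn Q).indicator (fun n => (1 : ℝ) / n) n :=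
    fun k => tsum_nonneg fun n => indicator_nonneg (fun _ _ => by positivity) _
  refine summable_log_rpow_div_of_summable_logLogBlock (by linarith)
    (summable_two_pow_rpow_mul_of_bdd (C := C) hα hS fun k => ?_)
  refine hC _ _ (one_le_pow₀ one_le_two) (hS k) fun t ht => ?_
  have ht0 : 0 < t := (by positivity : (0 : ℝ) < π / (2 * log 2) / 2 ^ k).trans_le ht.1
  rw [norm_div, Complex.norm_real, norm_of_nonneg ht0.le, mul_div_cancel₀ _ ht0.ne']
  exact tsum_logLogBlock_le_norm_zetaLine_sub (fun p hp => hp.1) (summable_one_div_genBy hP) k ht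

/-- With `Q`, `P`, `J` as before, `Σ_{p∈P} 1/p < ∞`, `q > 1` and
`1/q + 1/q' = 1`: if `Σ_{p∈P} (log p)^{1/q'}/p = ∞` then for every `r > q` the function
`t ↦ (ζ_J(1+it) − ζ_J(1))/t` fails to be in `L^r(I)` for some bounded interval `I`. -/
theorem statement15 (Q : Set ℕ) (hQ : ∀ p ∈ Q, p.Prime)
    (hP : Summable fun p : primesNotIn Q => (1 : ℝ) / ((p : ℕ) : ℝ))
    (q q' : ℝ) (hq : 1 < q) (hq' : 1 / q + 1 / q' = 1)
    (hsum : ¬ Summable fun p : primesNotIn Q =>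
      Real.log ((p : ℕ) : ℝ) ^ (1 / q') / ((p : ℕ) : ℝ)) :
    ∀ r : ℝ, q < r →
      ∃ a b : ℝ, ¬ MemLp
        (fun t : ℝ =>
          (zetaLine (genBy (primesNotIn Q)) t - zetaLine (genBy (primesNotIn Q)) 0) / (t : ℂ))
        (ENNReal.ofReal r) (volume.restrict (Ioo a b)) :=
  statement15_general Q hP q q' hq hq' hsum
end
end

section
/- There exists a set Q of prime numbers such that Σ_{p prime, p∉Q} 1/p < ∞ but the prime number theorem fails for Q, i.e. it is not the case that π_Q(x) ~ x/log x as x → ∞. -/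
/-! Remove from the primes the blocks `(m_k, 8 m_k]` along a sequence with `log m_k ≥ 2 ^ k`.
By Chebyshev's bound `π(x) ≤ 2 x / log x`, the `k`-th block has reciprocal sum at most
`16 / log m_k ≤ 16 / 2 ^ k`, so the removed primes have a convergent reciprocal sum. For the set
`Q` of remaining primes, however, `π_Q(8 m_k) ≤ π(m_k) ≤ 2 m_k / log m_k`, which is less than
half of `8 m_k / log (8 m_k)` once `m_k > 8`, so `π_Q(x) ~ x / log x` fails. -/

open MeasureTheory Set Filter Topology ComplexConjugate

noncomputable section

theorem summable_subtype_of_subset_iUnion {ι α : Type*} {f : α → ℝ} (hf : ∀ x, 0 ≤ f x)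
    {s : ι → Finset α} (hs : Summable fun i => ∑ x ∈ s i, f x) {S : Set α}
    (hS : S ⊆ ⋃ i, (s i : Set α)) : Summable fun x : S => f x := by
  have hsigma : Summable fun x : Σ i, (s i : Set α) => f x.2 := by
    refine (summable_sigma_of_nonneg fun _ => hf _).2 ⟨fun i => ?_, ?_⟩
    · exact (Set.toFinite _).summable _
    · simpa only [Finset.tsum_subtype'] using hs
  have hunion : Summable fun x : ⋃ i, (s i : Set α) => f x := by
    have hsurj := Set.sigmaToiUnion_surjective fun i => (s i : Set α)
    refine (hsigma.comp_injective (Function.injective_surjInv hsurj)).congr fun x => ?_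
    conv_rhs => rw [← Function.surjInv_eq hsurj x]
    rfl
  exact hunion.comp_injective (Set.inclusion_injective hS)

theorem eventually_primeCounting_le_two_mul_div_log :
    ∀ᶠ x : ℝ in atTop, (Nat.primeCounting ⌊x⌋₊ : ℝ) ≤ 2 * x / Real.log x := by
  have hlog4 : Real.log 4 < 2 := by
    have : Real.log 4 = 2 * Real.log 2 := by
      rw [show (4 : ℝ) = 2 ^ 2 by norm_num, Real.log_pow, Nat.cast_ofNat]
    linarith [Real.log_two_lt_d9]
  filter_upwards [Chebyshev.eventually_primeCounting_le (sub_pos.2 hlog4)] with x hx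
  simpa using hx

theorem eventually_sum_inv_primes_Ioc_le {A : ℕ} (hA : 0 < A) :
    ∀ᶠ m : ℕ in atTop,
      ∑ p ∈ Finset.Ioc m (A * m) with p.Prime, (1 / p : ℝ) ≤ 2 * A / Real.log m := by
  obtain ⟨X, hX⟩ := eventually_atTop.1 eventually_primeCounting_le_two_mul_div_log
  filter_upwards [eventually_ge_atTop ⌈X⌉₊, eventually_ge_atTop 2] with m hmX hm2
  have hm : (2 : ℝ) ≤ m := by exact_mod_cast hm2
  have hA1 : (1 : ℝ) ≤ A := by exact_mod_cast hA
  have hlog : 0 < Real.log m := Real.log_pos (by linarith)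
  have hcard : (((Finset.Ioc m (A * m)).filter Nat.Prime).card : ℝ) ≤ 2 * A * m / Real.log m :=
    calc (((Finset.Ioc m (A * m)).filter Nat.Prime).card : ℝ) ≤ Nat.primeCounting (A * m) := by
          rw [← Nat.primesLE_card_eq_primeCounting]
          exact_mod_cast Finset.card_le_card fun p => by
            simp only [Finset.mem_filter, Finset.mem_Ioc, Nat.mem_primesLE]
            tauto
      _ ≤ 2 * (A * m : ℝ) / Real.log (A * m) := by
          have hAm : X ≤ ((A * m : ℕ) : ℝ) := by
            push_cast
            exact (Nat.ceil_le.1 hmX).trans (le_mul_of_one_le_left (by positivity) hA1)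
          have := hX _ hAm
          rwa [Nat.floor_natCast, Nat.cast_mul] at this
      _ ≤ 2 * A * m / Real.log m := by
          rw [mul_assoc]
          gcongr
          exact le_mul_of_one_le_left (by positivity) hA1
  calc ∑ p ∈ Finset.Ioc m (A * m) with p.Prime, (1 / p : ℝ)
      ≤ ∑ p ∈ Finset.Ioc m (A * m) with p.Prime, (1 / m : ℝ) := by
        refine Finset.sum_le_sum fun p hp => ?_
        have hmp : m < p := (Finset.mem_Ioc.1 (Finset.mem_filter.1 hp).1).1
        gcongr
    _ = ((Finset.Ioc m (A * m)).filter Nat.Prime).card * (1 / m : ℝ) := by simp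
    _ ≤ 2 * A * m / Real.log m * (1 / m) := by gcongr
    _ = 2 * A / Real.log m := by field_simp

theorem countK_le_primeCounting {Q : Set ℕ} (hQ : ∀ p ∈ Q, p.Prime) {x : ℝ} {m : ℕ}
    (hgap : ∀ p ∈ Q, (p : ℝ) ≤ x → p ≤ m) : countK Q x ≤ Nat.primeCounting m := by
  rw [countK, ← Nat.primesLE_card_eq_primeCounting, ← Set.ncard_coe_finset]
  refine Nat.cast_le.2 (Set.ncard_le_ncard (fun p ⟨hpQ, hpx⟩ => ?_) (Finset.finite_toSet _))
  simp [Nat.mem_primesLE, hQ p hpQ, hgap p hpQ hpx]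

theorem eventually_div_two_mul_log_le {f : ℝ → ℝ}
    (h : Tendsto (fun x : ℝ => f x / (x / Real.log x)) atTop (𝓝 1)) :
    ∀ᶠ x : ℝ in atTop, x / (2 * Real.log x) ≤ f x := by
  filter_upwards [(tendsto_order.1 h).1 (1 / 2) (by norm_num), eventually_gt_atTop 1]
    with x hx hx1
  have hpos : 0 < x / Real.log x := div_pos (by linarith) (Real.log_pos hx1)
  rw [lt_div_iff₀ hpos] at hx
  calc x / (2 * Real.log x) = 1 / 2 * (x / Real.log x) := by ring
    _ ≤ f x := hx.le

theorem two_mul_div_log_lt {m : ℝ} (hm : 8 < m) :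
    2 * m / Real.log m < 8 * m / (2 * Real.log (8 * m)) := by
  have h8 : Real.log 8 < Real.log m := Real.log_lt_log (by norm_num) hm
  have h8pos : 0 < Real.log 8 := Real.log_pos (by norm_num)
  rw [Real.log_mul (by norm_num) (by linarith), div_lt_div_iff₀ (by linarith) (by linarith)]
  nlinarith

theorem not_tendsto_countK_of_frequently_gap {Q : Set ℕ} (hQ : ∀ p ∈ Q, p.Prime)
    (hgap : ∃ᶠ m : ℕ in atTop, ∀ p ∈ Q, p ≤ m ∨ 8 * m < p) :
    ¬ Tendsto (fun x : ℝ => countK Q x / (x / Real.log x)) atTop (𝓝 1) := by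
  intro h
  obtain ⟨X, hX⟩ := eventually_atTop.1
    ((eventually_div_two_mul_log_le h).and eventually_primeCounting_le_two_mul_div_log)
  obtain ⟨m, hm, hmX⟩ := (hgap.and_eventually (eventually_ge_atTop (⌈X⌉₊ + 9))).exists
  have hXm : X ≤ m := (Nat.le_ceil X).trans (by exact_mod_cast (Nat.le_add_right _ 9).trans hmX)
  have h8m : 8 < (m : ℝ) := by exact_mod_cast (show 8 < m by omega)
  have hupper : countK Q (8 * m) ≤ Nat.primeCounting m :=
    countK_le_primeCounting hQ fun p hp hpx =>
      (hm p hp).resolve_right (not_lt.2 (by exact_mod_cast hpx))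
  have hlower := (hX (8 * m) (by linarith)).1
  have hcheb := (hX m hXm).2
  rw [Nat.floor_natCast] at hcheb
  linarith [two_mul_div_log_lt h8m]

theorem exists_tendsto_two_pow_le_log (N : ℕ) :
    ∃ m : ℕ → ℕ, Tendsto m atTop atTop ∧ ∀ k, N ≤ m k ∧ (2 : ℝ) ^ k ≤ Real.log (m k) := by
  refine ⟨fun k => max N ⌈Real.exp (2 ^ k)⌉₊, ?_, fun k => ⟨le_max_left _ _, ?_⟩⟩
  · exact tendsto_atTop_mono (fun k => le_max_right _ _) <| tendsto_nat_ceil_atTop.comp <|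
      Real.tendsto_exp_atTop.comp (tendsto_pow_atTop_atTop_of_one_lt one_lt_two)
  · have hexp : Real.exp (2 ^ k) ≤ (max N ⌈Real.exp (2 ^ k)⌉₊ : ℕ) :=
      (Nat.le_ceil _).trans (by exact_mod_cast le_max_right _ _)
    rw [Real.le_log_iff_exp_le ((Real.exp_pos _).trans_le hexp)]
    exact hexp

/-- There is a set `Q` of primes with `Σ_{p∉Q prime} 1/p < ∞` for which
the prime number theorem `π_Q(x) ~ x/log x` fails. -/
theorem statement18 :
    ∃ Q : Set ℕ, (∀ p ∈ Q, p.Prime) ∧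
      (Summable fun p : primesNotIn Q => (1 : ℝ) / ((p : ℕ) : ℝ)) ∧
      ¬ Tendsto (fun x : ℝ => countK Q x / (x / Real.log x)) atTop (𝓝 1) := by
  obtain ⟨N, hN⟩ :=
    eventually_atTop.1 (eventually_sum_inv_primes_Ioc_le (A := 8) (by norm_num))
  obtain ⟨m, hm_tendsto, hm⟩ := exists_tendsto_two_pow_le_log N
  set block : ℕ → Finset ℕ := fun k => {p ∈ Finset.Ioc (m k) (8 * m k) | p.Prime}
  refine ⟨{p | p.Prime ∧ ∀ k, p ∉ block k}, fun p hp => hp.1, ?_, ?_⟩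
  · have hblock : ∀ k, ∑ p ∈ block k, (1 / p : ℝ) ≤ 16 * (1 / 2) ^ k := fun k =>
      calc ∑ p ∈ block k, (1 / p : ℝ) ≤ 2 * 8 / Real.log (m k) := by
            exact_mod_cast hN _ (hm k).1
        _ ≤ 2 * 8 / 2 ^ k := by gcongr; exact (hm k).2
        _ = 16 * (1 / 2) ^ k := by rw [one_div_pow]; ring
    refine summable_subtype_of_subset_iUnion (fun n => by positivity) (s := block)
      (Summable.of_nonneg_of_le (fun k => by positivity) hblock
        (summable_geometric_two.mul_left 16)) ?_
    rintro p ⟨hp, hpQ⟩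
    simpa [hp] using hpQ
  · refine not_tendsto_countK_of_frequently_gap (fun p hp => hp.1) <|
      hm_tendsto.frequently (Frequently.of_forall fun k p hp => ?_)
    have := hp.2 k
    simp only [block, Finset.mem_filter, Finset.mem_Ioc, not_and, hp.1, and_true,
      not_le] at this
    omega

end
end
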